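/- arXiv:1608.06854 — 7 statements merged into one kernel-verified Lean document; each statement's English description precedes it below -/
import Mathlib

section
/- Let d, J ≥ 1 be integers. Let F, G be functions from (d-tuples of positive integers) × (positive integers) to ℂ, let A be a function from (J-tuples of positive integers) × (d-tuples of positive integers) to ℂ that is multiplicative, and let α be a function from (J-tuples of positive integers) × (d-tuples of positive integers) to d-tuples of positive integers that is multiplicative (with componentwise products), with the additional property that if every entry of the pair (a, m) is a power of a single prime p, then every entry of α(a, m) is a power of p. Assume that for every squarefree positive integer N and every tuple m, the family (A(a, m_L) · G(α(a, m_L)·(m/m_L), M)) indexed by factorizations LM = N and tuples a with a | L^∞ is absolutely summable, and similarly with F in place of G, and that F(m, N) = Σ_{LM = N} Σ_{a | L^∞} A(a, m_L) · G(α(a, m_L)·(m/m_L), M). Then for every squarefree positive integer N and every tuple m of positive integers, G(m, N) = Σ_{LM = N} μ(L) Σ_{a | L^∞} A(a, m_L) · F(α(a, m_L)·(m/m_L), M), where μ is the Möbius function. -/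
/-- `lPart L n` is the largest divisor of `n` all of whose prime factors divide `L`
(the "`L`-part" `n_L` of `n`). -/
def lPart (L n : ℕ) : ℕ := ∏ p ∈ n.primeFactors.filter (· ∣ L), p ^ n.factorization p

/-!
Write `Φ(K, c) = A(c, m_K) G(α(c, m_K) · (m / m_K), N / K)` for `K ∣ N` and `c ∣ K^∞`.
Substituting the relation for `F` at level `N / L` into the `L`-th sum on the right,
multiplicativity of `A` and `α` (together with the fact that `α(a, m_L)` only involves primes
of `L`) merges `a ∣ L^∞` and `b ∣ L'^∞` into `c = a b ∣ (L L')^∞`. As `N` is squarefree,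
`(a, L', b) ↦ (L L', a b)` is a bijection onto the pairs `(K, c)` with `L ∣ K`, so the `L`-th sum
is `∑_{L ∣ K} Φ(K, c)`. Absolute summability allows exchanging the sums, and
`∑_{L ∣ K} μ(L) = [K = 1]` leaves `Φ(1, 1) = G(m, N)`.
-/

/-- `n ∣ L^∞` in the paper's notation. -/
def DvdPowerOf (n L : ℕ) : Prop := ∀ p : ℕ, p.Prime → p ∣ n → p ∣ L

namespace DvdPowerOf

lemma refl (L : ℕ) : DvdPowerOf L L := fun _ _ h => h

lemma trans {n k L : ℕ} (h₁ : DvdPowerOf n k) (h₂ : DvdPowerOf k L) : DvdPowerOf n L :=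
  fun p hp h => h₂ p hp (h₁ p hp h)

lemma of_dvd {n k L : ℕ} (h : n ∣ k) (hk : DvdPowerOf k L) : DvdPowerOf n L :=
  fun p hp hn => hk p hp (hn.trans h)

lemma mul {x y L : ℕ} (hx : DvdPowerOf x L) (hy : DvdPowerOf y L) : DvdPowerOf (x * y) L :=
  fun p hp h => ((Nat.Prime.dvd_mul hp).1 h).elim (hx p hp) (hy p hp)

lemma prod {ι : Type*} {s : Finset ι} {f : ι → ℕ} {L : ℕ} (h : ∀ i ∈ s, DvdPowerOf (f i) L) :
    DvdPowerOf (∏ i ∈ s, f i) L := fun p hp hd => by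
  obtain ⟨i, hi, hpi⟩ := (Prime.dvd_finsetProd_iff hp.prime f).1 hd
  exact h i hi p hp hpi

lemma mono {n L K : ℕ} (h : DvdPowerOf n L) (hLK : L ∣ K) : DvdPowerOf n K :=
  fun p hp hn => (h p hp hn).trans hLK

lemma coprime {x y L L' : ℕ} (hLL' : L.Coprime L') (hx : DvdPowerOf x L) (hy : DvdPowerOf y L') :
    x.Coprime y :=
  Nat.coprime_of_dvd fun p hp hpx hpy => Nat.not_coprime_of_dvd_of_dvd hp.one_lt
    (hx p hp hpx) (hy p hp hpy) hLL'

lemma eq_one_of_one {n : ℕ} (h : DvdPowerOf n 1) : n = 1 := by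
  by_contra hn
  obtain ⟨p, hp, hpn⟩ := Nat.exists_prime_and_dvd hn
  exact hp.ne_one (Nat.dvd_one.1 (h p hp hpn))

end DvdPowerOf

section lPart

lemma lPart_pos (L n : ℕ) : 0 < lPart L n :=
  Finset.prod_pos fun _ hp =>
    pow_pos (Nat.prime_of_mem_primeFactors (Finset.mem_filter.1 hp).1).pos _

lemma factorization_lPart (L n q : ℕ) :
    (lPart L n).factorization q = if q ∣ L then n.factorization q else 0 := by
  have hprime : ∀ p ∈ n.primeFactors.filter (· ∣ L), p.Prime := fun p hp =>
    Nat.prime_of_mem_primeFactors (Finset.mem_filter.1 hp).1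
  rw [lPart, Nat.factorization_prod fun p hp => pow_ne_zero _ (hprime p hp).ne_zero,
    Finset.sum_apply', Finset.sum_congr rfl fun p hp => by
      rw [(hprime p hp).factorization_pow, Finsupp.single_apply],
    Finset.sum_ite_eq']
  by_cases hq : q ∈ n.primeFactors
  · simp [hq]
  · have : n.factorization q = 0 := Finsupp.notMem_support_iff.mp hq
    simp [hq, this]

lemma lPart_dvd (L n : ℕ) : lPart L n ∣ n := by
  rcases eq_or_ne n 0 with rfl | hn
  · exact dvd_zero _
  rw [← Nat.factorization_le_iff_dvd (lPart_pos L n).ne' hn]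
  intro q
  rw [factorization_lPart]
  split_ifs <;> simp

lemma dvdPowerOf_lPart (L n : ℕ) : DvdPowerOf (lPart L n) L := by
  intro p hp h
  have := (hp.dvd_iff_one_le_factorization (lPart_pos L n).ne').1 h
  rw [factorization_lPart] at this
  by_contra hpL
  simp [hpL] at this

lemma lPart_eq_one_of_coprime {L n : ℕ} (h : n.Coprime L) : lPart L n = 1 :=
  Finset.prod_eq_one fun p hp => by
    obtain ⟨hpn, hpL⟩ := Finset.mem_filter.1 hp
    exact absurd h (Nat.not_coprime_of_dvd_of_dvd (Nat.prime_of_mem_primeFactors hpn).one_lt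
      (Nat.dvd_of_mem_primeFactors hpn) hpL)

lemma lPart_eq_self {L n : ℕ} (hn : n ≠ 0) (h : DvdPowerOf n L) : lPart L n = n := by
  rw [lPart, Finset.filter_true_of_mem fun p hp =>
    h p (Nat.prime_of_mem_primeFactors hp) (Nat.dvd_of_mem_primeFactors hp)]
  exact Nat.prod_factorization_pow_eq_self hn

lemma lPart_mul (L : ℕ) {x y : ℕ} (hx : x ≠ 0) (hy : y ≠ 0) :
    lPart L (x * y) = lPart L x * lPart L y := by
  refine Nat.eq_of_factorization_eq (lPart_pos _ _).ne'
    (Nat.mul_ne_zero (lPart_pos _ _).ne' (lPart_pos _ _).ne') fun q => ?_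
  rw [Nat.factorization_mul (lPart_pos L x).ne' (lPart_pos L y).ne', Finsupp.add_apply,
    factorization_lPart, factorization_lPart, factorization_lPart, Nat.factorization_mul hx hy,
    Finsupp.add_apply]
  split_ifs <;> simp

lemma lPart_mul_of_coprime {L L' : ℕ} (h : L.Coprime L') (n : ℕ) :
    lPart (L * L') n = lPart L n * lPart L' n := by
  refine Nat.eq_of_factorization_eq (lPart_pos _ _).ne'
    (Nat.mul_ne_zero (lPart_pos _ _).ne' (lPart_pos _ _).ne') fun q => ?_
  rw [Nat.factorization_mul (lPart_pos L n).ne' (lPart_pos L' n).ne', Finsupp.add_apply,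
    factorization_lPart, factorization_lPart, factorization_lPart]
  by_cases hq : q.Prime
  · by_cases h1 : q ∣ L <;> by_cases h2 : q ∣ L'
    · exact absurd h (Nat.not_coprime_of_dvd_of_dvd hq.one_lt h1 h2)
    all_goals simp [hq.dvd_mul, h1, h2]
  · simp [Nat.factorization_eq_zero_of_not_prime n hq]

lemma div_lPart_pos (L : ℕ) {n : ℕ} (hn : 0 < n) : 0 < n / lPart L n :=
  Nat.div_pos (Nat.le_of_dvd hn (lPart_dvd L n)) (lPart_pos L n)

lemma coprime_div_lPart (L : ℕ) {n : ℕ} (hn : n ≠ 0) : (n / lPart L n).Coprime L := by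
  refine Nat.coprime_of_dvd fun p hp hpn hpL => ?_
  have := (hp.dvd_iff_one_le_factorization (div_lPart_pos L (Nat.pos_of_ne_zero hn)).ne').1 hpn
  rw [Nat.factorization_div (lPart_dvd L n), Finsupp.tsub_apply, factorization_lPart,
    if_pos hpL] at this
  simp at this

lemma lPart_mul_eq_left {L x y : ℕ} (hx : x ≠ 0) (hy : y ≠ 0) (hxL : DvdPowerOf x L)
    (hyL : y.Coprime L) : lPart L (x * y) = x := by
  rw [lPart_mul L hx hy, lPart_eq_self hx hxL, lPart_eq_one_of_coprime hyL, mul_one]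

lemma lPart_mul_eq_right {L L' x y : ℕ} (hLL' : L.Coprime L') (hx : x ≠ 0) (hy : y ≠ 0)
    (hxL : DvdPowerOf x L) : lPart L' (x * y) = lPart L' y := by
  rw [lPart_mul L' hx hy, lPart_eq_one_of_coprime (hxL.coprime hLL' (DvdPowerOf.refl L')),
    one_mul]

lemma lPart_div_lPart {L L' n : ℕ} (hLL' : L.Coprime L') (hn : 0 < n) :
    lPart L' (n / lPart L n) = lPart L' n := by
  conv_rhs => rw [← Nat.mul_div_cancel' (lPart_dvd L n)]
  exact (lPart_mul_eq_right hLL' (lPart_pos L n).ne' (div_lPart_pos L hn).ne'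
    (dvdPowerOf_lPart L n)).symm

lemma lPart_mul_div_lPart {L L' n w : ℕ} (hLL' : L.Coprime L') (hn : 0 < n) (hw : 0 < w)
    (hwL : DvdPowerOf w L) : lPart L' (w * (n / lPart L n)) = lPart L' n := by
  rw [lPart_mul_eq_right hLL' hw.ne' (div_lPart_pos L hn).ne' hwL, lPart_div_lPart hLL' hn]

lemma mul_div_lPart_div_lPart {L L' n w : ℕ} (hLL' : L.Coprime L') (hn : 0 < n) (hw : 0 < w)
    (hwL : DvdPowerOf w L) :
    w * (n / lPart L n) / lPart L' (w * (n / lPart L n)) = w * (n / lPart (L * L') n) := by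
  rw [lPart_mul_div_lPart hLL' hn hw hwL, ← lPart_div_lPart hLL' hn,
    Nat.mul_div_assoc w (lPart_dvd L' _), lPart_div_lPart hLL' hn, Nat.div_div_eq_div_mul,
    lPart_mul_of_coprime hLL']

end lPart

lemma ordProj_mul_ordCompl_fun {ι : Type*} (p : ℕ) (a : ι → ℕ) :
    ((fun i => ordProj[p] (a i)) * fun i => ordCompl[p] (a i)) = a :=
  funext fun i => Nat.ordProj_mul_ordCompl_eq_self (a i) p

lemma coprime_prod_ordCompl {ι : Type*} [Fintype ι] {p : ℕ} (hp : p.Prime) {a : ι → ℕ}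
    (ha : ∀ i, 0 < a i) : p.Coprime (∏ i, ordCompl[p] (a i)) :=
  Nat.Coprime.prod_right fun i _ => Nat.coprime_ordCompl hp (ha i).ne'

lemma prod_ordCompl_dvd {ι : Type*} [Fintype ι] (p : ℕ) (a : ι → ℕ) :
    ∏ i, ordCompl[p] (a i) ∣ ∏ i, a i :=
  Finset.prod_dvd_prod_of_dvd _ _ fun i _ => Nat.ordCompl_dvd (a i) p

lemma eq_one_of_prod_dvd_one {ι : Type*} [Fintype ι] {a : ι → ℕ} (h : ∏ i, a i ∣ 1) : a = 1 :=
  funext fun i => Nat.eq_one_of_dvd_one ((Finset.dvd_prod_of_mem a (Finset.mem_univ i)).trans h)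

section Pairs

variable {d J : ℕ}

def IsMultiplicativeOnPairs {M : Type*} [Mul M] (f : (Fin J → ℕ) → (Fin d → ℕ) → M) : Prop :=
  ∀ (a b : Fin J → ℕ) (m n : Fin d → ℕ),
    Nat.Coprime ((∏ i, a i) * ∏ i, m i) ((∏ i, b i) * ∏ i, n i) →
      f (a * b) (m * n) = f a m * f b n

/-- Splitting off the `p`-parts of `a` and `m` for a prime `p ∣ ∏ a * ∏ m`, the `p`-part
contributes only the prime `p` and the rest has a smaller product. -/
theorem dvdPowerOf_apply_of_isMultiplicativeOnPairs
    {α : (Fin J → ℕ) → (Fin d → ℕ) → (Fin d → ℕ)} (hα1 : α 1 1 = 1)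
    (hαmul : IsMultiplicativeOnPairs α)
    (hαprime : ∀ p : ℕ, p.Prime → ∀ (a : Fin J → ℕ) (m : Fin d → ℕ),
      (∀ i, ∃ k, a i = p ^ k) → (∀ i, ∃ k, m i = p ^ k) → ∀ i, ∃ k, α a m i = p ^ k)
    {a : Fin J → ℕ} {m : Fin d → ℕ} (ha : ∀ i, 0 < a i) (hm : ∀ i, 0 < m i) (i : Fin d) :
    DvdPowerOf (α a m i) ((∏ j, a j) * ∏ j, m j) := by
  induction hn : (∏ j, a j) * ∏ j, m j using Nat.strong_induction_on generalizing a m with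
  | _ n ih =>
  rcases eq_or_ne n 1 with rfl | hn1
  · rw [eq_one_of_prod_dvd_one (Dvd.intro _ hn), eq_one_of_prod_dvd_one (Dvd.intro_left _ hn),
      hα1]
    intro q hq hq1
    exact absurd (Nat.dvd_one.1 hq1) hq.ne_one
  obtain ⟨p, hp, hpn⟩ := Nat.exists_prime_and_dvd hn1
  have hcop : p.Coprime ((∏ j, ordCompl[p] (a j)) * ∏ j, ordCompl[p] (m j)) :=
    (coprime_prod_ordCompl hp ha).mul_right (coprime_prod_ordCompl hp hm)
  have hsplit : α a m = α (fun j => ordProj[p] (a j)) (fun j => ordProj[p] (m j)) *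
      α (fun j => ordCompl[p] (a j)) (fun j => ordCompl[p] (m j)) := by
    conv_lhs => rw [← ordProj_mul_ordCompl_fun p a, ← ordProj_mul_ordCompl_fun p m]
    exact hαmul _ _ _ _ <| Nat.Coprime.mul_left (Nat.Coprime.prod_left fun j _ => hcop.pow_left _)
      (Nat.Coprime.prod_left fun j _ => hcop.pow_left _)
  have hdvd : (∏ j, ordCompl[p] (a j)) * ∏ j, ordCompl[p] (m j) ∣ n :=
    hn ▸ mul_dvd_mul (prod_ordCompl_dvd p a) (prod_ordCompl_dvd p m)
  have hlt : (∏ j, ordCompl[p] (a j)) * ∏ j, ordCompl[p] (m j) < n :=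
    lt_of_le_of_ne (Nat.le_of_dvd (hn ▸ Nat.mul_pos (Finset.prod_pos fun j _ => ha j)
      (Finset.prod_pos fun j _ => hm j)) hdvd)
      fun h => (Nat.Prime.coprime_iff_not_dvd hp).1 hcop (h ▸ hpn)
  rw [hsplit, Pi.mul_apply]
  refine DvdPowerOf.mul ?_ ((ih _ hlt (fun j => Nat.ordCompl_pos p (ha j).ne')
    (fun j => Nat.ordCompl_pos p (hm j).ne') rfl).trans (DvdPowerOf.of_dvd hdvd (.refl n)))
  obtain ⟨k, hk⟩ := hαprime p hp _ _ (fun j => ⟨_, rfl⟩) (fun j => ⟨_, rfl⟩) i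
  rw [hk]
  intro q hq hqp
  rwa [(Nat.prime_dvd_prime_iff_eq hq hp).1 (hq.dvd_of_dvd_pow hqp)]

end Pairs

lemma sum_divisors_moebius (n : ℕ) :
    ∑ L ∈ n.divisors, (ArithmeticFunction.moebius L : ℂ) = if n = 1 then 1 else 0 := by
  have := congrArg (· n) (ArithmeticFunction.coe_moebius_mul_coe_zeta (R := ℂ))
  simpa only [ArithmeticFunction.coe_mul_zeta_apply, ArithmeticFunction.one_apply,
    ArithmeticFunction.intCoe_apply] using this

lemma sum_moebius_mul_tsum_ite_dvd {ι : Type*} {N : ℕ} (hN : N ≠ 0) (k : ι → ℕ)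
    (hk : ∀ y, k y ∣ N) {u : ι → ℂ} (hu : Summable fun y => ‖u y‖) :
    ∑ L ∈ N.divisors, (ArithmeticFunction.moebius L : ℂ) * ∑' y, (if L ∣ k y then u y else 0) =
      ∑' y, if k y = 1 then u y else 0 := by
  have hsum : ∀ L ∈ N.divisors,
      Summable fun y => if L ∣ k y then (ArithmeticFunction.moebius L : ℂ) * u y else 0 :=
    fun L _ => .of_norm_bounded (hu.mul_left ‖(ArithmeticFunction.moebius L : ℂ)‖) fun y => by
      split_ifs
      · simp
      · simp only [norm_zero]
        positivity
  simp_rw [← tsum_mul_left, mul_ite, mul_zero]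
  rw [← Summable.tsum_finsetSum hsum]
  refine tsum_congr fun y => ?_
  rw [← Finset.sum_filter, Nat.divisors_filter_dvd_of_dvd hN (hk y), ← Finset.sum_mul,
    sum_divisors_moebius, ite_mul, one_mul, zero_mul]

abbrev DvdPowTuple (J L : ℕ) : Type :=
  {a : Fin J → ℕ // (∀ i, 0 < a i) ∧ ∀ i, ∀ p : ℕ, p.Prime → p ∣ a i → p ∣ L}

abbrev DivisorTuple (J N : ℕ) : Type := Σ K : {K : ℕ // K ∣ N}, DvdPowTuple J K.1

namespace DivisorTuple

variable {J N : ℕ}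

lemma ext_of_val {x y : DivisorTuple J N} (h₁ : x.1.1 = y.1.1) (h₂ : x.2.1 = y.2.1) : x = y := by
  obtain ⟨⟨K, hK⟩, ⟨c, hc⟩⟩ := x
  obtain ⟨⟨K', hK'⟩, ⟨c', hc'⟩⟩ := y
  dsimp only at h₁ h₂
  subst h₁ h₂
  rfl

variable (J N) in
def one : DivisorTuple J N := ⟨⟨1, one_dvd N⟩, 1, fun _ => Nat.one_pos, fun _ _ _ h => h⟩

lemma eq_one_of_val_eq_one {x : DivisorTuple J N} (h : x.1.1 = 1) : x = one J N :=
  ext_of_val h (funext fun i => DvdPowerOf.eq_one_of_one (h ▸ x.2.2.2 i))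

lemma tsum_ite_val_eq_one (u : DivisorTuple J N → ℂ) :
    ∑' y, (if y.1.1 = 1 then u y else 0) = u (one J N) :=
  (tsum_eq_single (one J N) fun _ hy => if_neg fun h => hy (eq_one_of_val_eq_one h)).trans
    (if_pos rfl)

def ofSplit {L : ℕ} (hL : L ∣ N)
    (x : Σ _a : DvdPowTuple J L, Σ L' : (N / L).divisors, DvdPowTuple J L'.1) :
    DivisorTuple J N :=
  ⟨⟨L * x.2.1, Nat.mul_dvd_of_dvd_div hL (Nat.dvd_of_mem_divisors x.2.1.2)⟩,
    x.1.1 * x.2.2.1, fun i => Nat.mul_pos (x.1.2.1 i) (x.2.2.2.1 i),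
    fun i => DvdPowerOf.mul (DvdPowerOf.mono (x.1.2.2 i) (dvd_mul_right _ _))
      (DvdPowerOf.mono (x.2.2.2.2 i) (dvd_mul_left _ _))⟩

variable {L : ℕ}

lemma ofSplit_injective (hN : Squarefree N) (hL : L ∣ N) :
    Function.Injective (ofSplit (J := J) hL) := by
  rintro ⟨a₁, ⟨L₁, hL₁⟩, b₁⟩ ⟨a₂, ⟨L₂, hL₂⟩, b₂⟩ h
  have hK : L * L₁ = L * L₂ := congrArg (fun y : DivisorTuple J N => y.1.1) h
  have hc : a₁.1 * b₁.1 = a₂.1 * b₂.1 := congrArg (fun y : DivisorTuple J N => y.2.1) h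
  obtain rfl : L₁ = L₂ :=
    Nat.eq_of_mul_eq_mul_left (Nat.pos_of_dvd_of_pos hL (Nat.pos_of_ne_zero hN.ne_zero)) hK
  have hLL₁ : L.Coprime L₁ := (Nat.squarefree_mul_iff.1 (hN.squarefree_of_dvd
    (Nat.mul_dvd_of_dvd_div hL (Nat.dvd_of_mem_divisors hL₁)))).1
  have hlPart : ∀ (a : DvdPowTuple J L) (b : DvdPowTuple J L₁) i,
      lPart L ((a.1 * b.1) i) = a.1 i :=
    fun a b i => lPart_mul_eq_left (a.2.1 i).ne' (b.2.1 i).ne' (a.2.2 i)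
      (DvdPowerOf.coprime hLL₁.symm (b.2.2 i) (.refl L))
  obtain rfl : a₁ = a₂ := Subtype.ext (funext fun i => by rw [← hlPart a₁ b₁ i, hc, hlPart])
  obtain rfl : b₁ = b₂ := Subtype.ext (funext fun i =>
    Nat.eq_of_mul_eq_mul_left (a₁.2.1 i) (congrFun hc i))
  rfl

lemma exists_ofSplit_eq (hN : N ≠ 0) (hL : L ∣ N) {y : DivisorTuple J N}
    (hLy : L ∣ y.1.1) : ∃ x, ofSplit hL x = y := by
  obtain ⟨⟨K, hK⟩, c, hc, hcK⟩ := y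
  obtain ⟨L', rfl⟩ := hLy
  have hL' : L' ∈ (N / L).divisors := Nat.mem_divisors.2 ⟨Nat.dvd_div_of_mul_dvd hK,
    (Nat.div_pos (Nat.le_of_dvd (Nat.pos_of_ne_zero hN) hL)
      (Nat.pos_of_dvd_of_pos hL (Nat.pos_of_ne_zero hN))).ne'⟩
  refine ⟨⟨⟨fun i => lPart L (c i), fun i => lPart_pos L (c i),
      fun i => dvdPowerOf_lPart L (c i)⟩,
    ⟨L', hL'⟩, fun i => c i / lPart L (c i), fun i => div_lPart_pos L (hc i),
    fun i p hp hpc => ?_⟩,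
    ext_of_val rfl (funext fun i => Nat.mul_div_cancel' (lPart_dvd L (c i)))⟩
  refine ((Nat.Prime.dvd_mul hp).1 (hcK i p hp (hpc.trans (Nat.div_dvd_of_dvd
    (lPart_dvd L (c i)))))).resolve_left fun hpL => ?_
  exact Nat.not_coprime_of_dvd_of_dvd hp.one_lt hpc hpL (coprime_div_lPart L (hc i).ne')

lemma tsum_sum_tsum_eq_tsum_ite_dvd (hN : Squarefree N) (hL : L ∣ N)
    (Φ : ℕ → (Fin J → ℕ) → ℂ) (hΦ : Summable fun y : DivisorTuple J N => ‖Φ y.1.1 y.2.1‖) :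
    ∑' a : DvdPowTuple J L, ∑ L' ∈ (N / L).divisors, ∑' b : DvdPowTuple J L',
        Φ (L * L') (a.1 * b.1) =
      ∑' y : DivisorTuple J N, if L ∣ y.1.1 then Φ y.1.1 y.2.1 else 0 := by
  set u := fun y : DivisorTuple J N => Φ y.1.1 y.2.1
  have hsum : Summable fun x => u (ofSplit hL x) :=
    hΦ.of_norm.comp_injective (ofSplit_injective hN hL)
  have hsum_a : ∀ a, Summable fun z : (Σ L' : (N / L).divisors, DvdPowTuple J L'.1) =>
      u (ofSplit hL ⟨a, z⟩) := hsum.sigma_factor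
  calc _ = ∑' a : DvdPowTuple J L, ∑' z : (Σ L' : (N / L).divisors, DvdPowTuple J L'.1),
          u (ofSplit hL ⟨a, z⟩) := tsum_congr fun a => by
        rw [← Finset.tsum_subtype, (hsum_a a).tsum_sigma]
        rfl
    _ = ∑' x, u (ofSplit hL x) := hsum.tsum_sigma.symm
    _ = ∑' y, if L ∣ y.1.1 then u y else 0 := by
        rw [← (ofSplit_injective hN hL).tsum_eq (f := fun y => if L ∣ y.1.1 then u y else 0)]
        · exact tsum_congr fun x => (if_pos (dvd_mul_right L _)).symm
        · intro y hy
          exact exists_ofSplit_eq hN.ne_zero hL (by_contra fun h => hy (if_neg h))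

end DivisorTuple

section InversionTerm

variable {d J : ℕ} (A : (Fin J → ℕ) → (Fin d → ℕ) → ℂ)
  (α : (Fin J → ℕ) → (Fin d → ℕ) → (Fin d → ℕ))

def inversionTerm (H : (Fin d → ℕ) → ℕ → ℂ) (m : Fin d → ℕ) (N L : ℕ) (a : Fin J → ℕ) : ℂ :=
  A a (fun i => lPart L (m i)) *
    H (α a (fun i => lPart L (m i)) * fun i => m i / lPart L (m i)) (N / L)

variable {A α}

lemma inversionTerm_one (hA1 : A 1 1 = 1) (hα1 : α 1 1 = 1) (H : (Fin d → ℕ) → ℕ → ℂ)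
    (m : Fin d → ℕ) (N : ℕ) : inversionTerm A α H m N 1 1 = H m N := by
  have hm1 : ∀ i, lPart 1 (m i) = 1 := fun i => lPart_eq_one_of_coprime (Nat.coprime_one_right _)
  simp only [inversionTerm, hm1, Nat.div_one]
  rw [show (fun _ => 1 : Fin d → ℕ) = 1 from rfl, hA1, hα1, one_mul, one_mul]

lemma mul_inversionTerm (hAmul : IsMultiplicativeOnPairs A) (hαmul : IsMultiplicativeOnPairs α)
    {L L' : ℕ} (hLL' : L.Coprime L') {a b : Fin J → ℕ} (haL : ∀ i, DvdPowerOf (a i) L)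
    (hbL : ∀ i, DvdPowerOf (b i) L') {m : Fin d → ℕ} (hm : ∀ i, 0 < m i)
    (hw : ∀ i, 0 < α a (fun i => lPart L (m i)) i)
    (hwL : ∀ i, DvdPowerOf (α a (fun i => lPart L (m i)) i) L) (H : (Fin d → ℕ) → ℕ → ℂ)
    (N : ℕ) :
    A a (fun i => lPart L (m i)) *
        inversionTerm A α H (α a (fun i => lPart L (m i)) * fun i => m i / lPart L (m i))
          (N / L) L' b =
      inversionTerm A α H m N (L * L') (a * b) := by
  set w := α a (fun i => lPart L (m i))
  have hlPart_w : (fun i => lPart L' ((w * fun i => m i / lPart L (m i)) i)) =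
      fun i => lPart L' (m i) :=
    funext fun i => lPart_mul_div_lPart hLL' (hm i) (hw i) (hwL i)
  have hdiv_w : (fun i => (w * fun i => m i / lPart L (m i)) i /
      lPart L' ((w * fun i => m i / lPart L (m i)) i)) =
      fun i => w i * (m i / lPart (L * L') (m i)) :=
    funext fun i => mul_div_lPart_div_lPart hLL' (hm i) (hw i) (hwL i)
  have hlPart_mul : (fun i => lPart (L * L') (m i)) =
      (fun i => lPart L (m i)) * fun i => lPart L' (m i) :=
    funext fun i => lPart_mul_of_coprime hLL' (m i)
  have hcop : Nat.Coprime ((∏ i, a i) * ∏ i, lPart L (m i))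
      ((∏ i, b i) * ∏ i, lPart L' (m i)) :=
    DvdPowerOf.coprime hLL'
      ((DvdPowerOf.prod fun i _ => haL i).mul (.prod fun i _ => dvdPowerOf_lPart L (m i)))
      ((DvdPowerOf.prod fun i _ => hbL i).mul (.prod fun i _ => dvdPowerOf_lPart L' (m i)))
  simp only [inversionTerm]
  rw [hlPart_w, hdiv_w, hlPart_mul, hAmul _ _ _ _ hcop, hαmul _ _ _ _ hcop,
    Nat.div_div_eq_div_mul, ← mul_assoc]
  congr 2
  funext i
  simp only [Pi.mul_apply]
  ring

lemma inversionTerm_eq_sum_tsum (hAmul : IsMultiplicativeOnPairs A)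
    (hαmul : IsMultiplicativeOnPairs α)
    (hαpos : ∀ (a : Fin J → ℕ) (m : Fin d → ℕ),
      (∀ i, 0 < a i) → (∀ i, 0 < m i) → ∀ i, 0 < α a m i)
    (hαsupp : ∀ (a : Fin J → ℕ) (m : Fin d → ℕ), (∀ i, 0 < a i) → (∀ i, 0 < m i) →
      ∀ i, DvdPowerOf (α a m i) ((∏ j, a j) * ∏ j, m j))
    {F G : (Fin d → ℕ) → ℕ → ℂ} {N L : ℕ} (hN : Squarefree N) (hL : L ∣ N)
    (hrel : ∀ m : Fin d → ℕ, (∀ i, 0 < m i) → F m (N / L) =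
      ∑ L' ∈ (N / L).divisors, ∑' b : DvdPowTuple J L', inversionTerm A α G m (N / L) L' b.1)
    {m : Fin d → ℕ} (hm : ∀ i, 0 < m i) (a : DvdPowTuple J L) :
    inversionTerm A α F m N L a.1 = ∑ L' ∈ (N / L).divisors, ∑' b : DvdPowTuple J L',
      inversionTerm A α G m N (L * L') (a.1 * b.1) := by
  have hw : ∀ i, 0 < α a.1 (fun i => lPart L (m i)) i :=
    hαpos _ _ a.2.1 fun i => lPart_pos L (m i)
  have hwL : ∀ i, DvdPowerOf (α a.1 (fun i => lPart L (m i)) i) L := fun i =>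
    (hαsupp _ _ a.2.1 (fun i => lPart_pos L (m i)) i).trans
      ((DvdPowerOf.prod fun j _ => a.2.2 j).mul (.prod fun j _ => dvdPowerOf_lPart L (m j)))
  rw [inversionTerm, hrel (α a.1 (fun i => lPart L (m i)) * fun i => m i / lPart L (m i))
    fun i => Nat.mul_pos (hw i) (div_lPart_pos L (hm i)), Finset.mul_sum]
  refine Finset.sum_congr rfl fun L' hL' => ?_
  have hLL' : L.Coprime L' := (Nat.squarefree_mul_iff.1 (hN.squarefree_of_dvd
    (Nat.mul_dvd_of_dvd_div hL (Nat.dvd_of_mem_divisors hL')))).1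
  rw [← tsum_mul_left]
  exact tsum_congr fun b => mul_inversionTerm hAmul hαmul hLL' a.2.2 b.2.2 hm hw hwL G N

end InversionTerm

theorem stmt3_general
    (d J : ℕ)
    (F G : (Fin d → ℕ) → ℕ → ℂ)
    (A : (Fin J → ℕ) → (Fin d → ℕ) → ℂ)
    (α : (Fin J → ℕ) → (Fin d → ℕ) → (Fin d → ℕ))
    (hA1 : A 1 1 = 1)
    (hAmul : ∀ (a b : Fin J → ℕ) (m n : Fin d → ℕ),
      Nat.Coprime ((∏ i, a i) * ∏ i, m i) ((∏ i, b i) * ∏ i, n i) →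
      A (a * b) (m * n) = A a m * A b n)
    (hα1 : α 1 1 = 1)
    (hαmul : ∀ (a b : Fin J → ℕ) (m n : Fin d → ℕ),
      Nat.Coprime ((∏ i, a i) * ∏ i, m i) ((∏ i, b i) * ∏ i, n i) →
      α (a * b) (m * n) = α a m * α b n)
    (hαpos : ∀ (a : Fin J → ℕ) (m : Fin d → ℕ),
      (∀ i, 0 < a i) → (∀ i, 0 < m i) → ∀ i, 0 < α a m i)
    (hαprime : ∀ p : ℕ, p.Prime → ∀ (a : Fin J → ℕ) (m : Fin d → ℕ),
      (∀ i, ∃ k, a i = p ^ k) → (∀ i, ∃ k, m i = p ^ k) → ∀ i, ∃ k, α a m i = p ^ k)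
    (hGsum : ∀ N : ℕ, Squarefree N → ∀ m : Fin d → ℕ, (∀ i, 0 < m i) →
      Summable (fun x : Σ L : {L : ℕ // L ∣ N},
          {a : Fin J → ℕ // (∀ i, 0 < a i) ∧ ∀ i, ∀ p : ℕ, p.Prime → p ∣ a i → p ∣ L.1} =>
        ‖A x.2.1 (fun i => lPart x.1.1 (m i)) *
          G (α x.2.1 (fun i => lPart x.1.1 (m i)) * fun i => m i / lPart x.1.1 (m i))
            (N / x.1.1)‖))
    (hrel : ∀ N : ℕ, Squarefree N → ∀ m : Fin d → ℕ, (∀ i, 0 < m i) →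
      F m N = ∑ L ∈ N.divisors,
        ∑' a : {a : Fin J → ℕ // (∀ i, 0 < a i) ∧ ∀ i, ∀ p : ℕ, p.Prime → p ∣ a i → p ∣ L},
          A a.1 (fun i => lPart L (m i)) *
            G (α a.1 (fun i => lPart L (m i)) * fun i => m i / lPart L (m i)) (N / L))
    (N : ℕ) (hN : Squarefree N) (m : Fin d → ℕ) (hm : ∀ i, 0 < m i) :
    G m N = ∑ L ∈ N.divisors, (ArithmeticFunction.moebius L : ℂ) *
        ∑' a : {a : Fin J → ℕ // (∀ i, 0 < a i) ∧ ∀ i, ∀ p : ℕ, p.Prime → p ∣ a i → p ∣ L},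
          A a.1 (fun i => lPart L (m i)) *
            F (α a.1 (fun i => lPart L (m i)) * fun i => m i / lPart L (m i)) (N / L) := by
  have hαsupp : ∀ (a : Fin J → ℕ) (m : Fin d → ℕ), (∀ i, 0 < a i) → (∀ i, 0 < m i) →
      ∀ i, DvdPowerOf (α a m i) ((∏ j, a j) * ∏ j, m j) := fun _ _ ha hm =>
    dvdPowerOf_apply_of_isMultiplicativeOnPairs hα1 hαmul hαprime ha hm
  have hu : Summable fun y : DivisorTuple J N => ‖inversionTerm A α G m N y.1.1 y.2.1‖ :=
    hGsum N hN m hm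
  symm
  calc ∑ L ∈ N.divisors, (ArithmeticFunction.moebius L : ℂ) *
        ∑' a : DvdPowTuple J L, inversionTerm A α F m N L a.1
      = ∑ L ∈ N.divisors, (ArithmeticFunction.moebius L : ℂ) * ∑' y : DivisorTuple J N,
          if L ∣ y.1.1 then inversionTerm A α G m N y.1.1 y.2.1 else 0 := by
        refine Finset.sum_congr rfl fun L hL => ?_
        have hLN := Nat.dvd_of_mem_divisors hL
        rw [← DivisorTuple.tsum_sum_tsum_eq_tsum_ite_dvd hN hLN _ hu]
        exact congrArg _ (tsum_congr (inversionTerm_eq_sum_tsum hAmul hαmul hαpos hαsupp hN hLN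
          (hrel _ (hN.squarefree_of_dvd (Nat.div_dvd_of_dvd hLN))) hm))
    _ = ∑' y : DivisorTuple J N, if y.1.1 = 1 then inversionTerm A α G m N y.1.1 y.2.1 else 0 :=
        sum_moebius_mul_tsum_ite_dvd hN.ne_zero _ (fun y => y.1.2) hu
    _ = G m N := (DivisorTuple.tsum_ite_val_eq_one _).trans (inversionTerm_one hA1 hα1 G m N)

/-- inversion formula. Suppose `F`, `G` are complex-valued functions of a
`d`-tuple of positive integers and a positive integer level, `A` is a multiplicative
complex-valued function of a `J`-tuple and a `d`-tuple of positive integers, and `α` is a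
multiplicative tuple-valued function sending prime-power input pairs to prime-power tuples
(for the same prime).  If, for every squarefree `N` and every tuple `m`, the families defining
the sums below are absolutely summable and
`F(m, N) = ∑_{L M = N} ∑_{a ∣ L^∞} A(a, m_L) G(α(a, m_L) ⬝ (m / m_L), M)`,
then for every squarefree `N` and tuple `m`,
`G(m, N) = ∑_{L M = N} μ(L) ∑_{a ∣ L^∞} A(a, m_L) F(α(a, m_L) ⬝ (m / m_L), M)`. -/
theorem stmt3
    (d J : ℕ) (hd : 1 ≤ d) (hJ : 1 ≤ J)
    (F G : (Fin d → ℕ) → ℕ → ℂ)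
    (A : (Fin J → ℕ) → (Fin d → ℕ) → ℂ)
    (α : (Fin J → ℕ) → (Fin d → ℕ) → (Fin d → ℕ))
    (hA1 : A 1 1 = 1)
    (hAmul : ∀ (a b : Fin J → ℕ) (m n : Fin d → ℕ),
      Nat.Coprime ((∏ i, a i) * ∏ i, m i) ((∏ i, b i) * ∏ i, n i) →
      A (a * b) (m * n) = A a m * A b n)
    (hα1 : α 1 1 = 1)
    (hαmul : ∀ (a b : Fin J → ℕ) (m n : Fin d → ℕ),
      Nat.Coprime ((∏ i, a i) * ∏ i, m i) ((∏ i, b i) * ∏ i, n i) →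
      α (a * b) (m * n) = α a m * α b n)
    (hαpos : ∀ (a : Fin J → ℕ) (m : Fin d → ℕ),
      (∀ i, 0 < a i) → (∀ i, 0 < m i) → ∀ i, 0 < α a m i)
    (hαprime : ∀ p : ℕ, p.Prime → ∀ (a : Fin J → ℕ) (m : Fin d → ℕ),
      (∀ i, ∃ k, a i = p ^ k) → (∀ i, ∃ k, m i = p ^ k) → ∀ i, ∃ k, α a m i = p ^ k)
    (hGsum : ∀ N : ℕ, Squarefree N → ∀ m : Fin d → ℕ, (∀ i, 0 < m i) →
      Summable (fun x : Σ L : {L : ℕ // L ∣ N},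
          {a : Fin J → ℕ // (∀ i, 0 < a i) ∧ ∀ i, ∀ p : ℕ, p.Prime → p ∣ a i → p ∣ L.1} =>
        ‖A x.2.1 (fun i => lPart x.1.1 (m i)) *
          G (α x.2.1 (fun i => lPart x.1.1 (m i)) * fun i => m i / lPart x.1.1 (m i))
            (N / x.1.1)‖))
    (hFsum : ∀ N : ℕ, Squarefree N → ∀ m : Fin d → ℕ, (∀ i, 0 < m i) →
      Summable (fun x : Σ L : {L : ℕ // L ∣ N},
          {a : Fin J → ℕ // (∀ i, 0 < a i) ∧ ∀ i, ∀ p : ℕ, p.Prime → p ∣ a i → p ∣ L.1} =>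
        ‖A x.2.1 (fun i => lPart x.1.1 (m i)) *
          F (α x.2.1 (fun i => lPart x.1.1 (m i)) * fun i => m i / lPart x.1.1 (m i))
            (N / x.1.1)‖))
    (hrel : ∀ N : ℕ, Squarefree N → ∀ m : Fin d → ℕ, (∀ i, 0 < m i) →
      F m N = ∑ L ∈ N.divisors,
        ∑' a : {a : Fin J → ℕ // (∀ i, 0 < a i) ∧ ∀ i, ∀ p : ℕ, p.Prime → p ∣ a i → p ∣ L},
          A a.1 (fun i => lPart L (m i)) *
            G (α a.1 (fun i => lPart L (m i)) * fun i => m i / lPart L (m i)) (N / L))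
    (N : ℕ) (hN : Squarefree N) (m : Fin d → ℕ) (hm : ∀ i, 0 < m i) :
    G m N = ∑ L ∈ N.divisors, (ArithmeticFunction.moebius L : ℂ) *
        ∑' a : {a : Fin J → ℕ // (∀ i, 0 < a i) ∧ ∀ i, ∀ p : ℕ, p.Prime → p ∣ a i → p ∣ L},
          A a.1 (fun i => lPart L (m i)) *
            F (α a.1 (fun i => lPart L (m i)) * fun i => m i / lPart L (m i)) (N / L) :=
  stmt3_general d J F G A α hA1 hAmul hα1 hαmul hαpos hαprime hGsum hrel N hN m hm
end

section
/- For every integer n ≥ 0 the following identity holds in ℝ[X]: (2X)^n = Σ_{j=0}^{n} c_{j,n} · U_j(X), where c_{j,n} = binom(n, (n+j)/2) − binom(n, (n+j)/2 + 1) when n − j is even, and c_{j,n} = 0 when n − j is odd. -/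
open Polynomial

/-- The Chebyshev coefficients: `c_{j,n} = C(n, (n+j)/2) - C(n, (n+j)/2 + 1)` when `n - j`
is even, and `c_{j,n} = 0` when `n - j` is odd (note `n - j` and `n + j` have the same
parity). -/
noncomputable def chebCoeff (j n : ℕ) : ℝ :=
  if (n + j) % 2 = 0 then
    (n.choose ((n + j) / 2) : ℝ) - (n.choose ((n + j) / 2 + 1) : ℝ)
  else 0

/-!
Multiplication by `2X` acts on the basis `U_j` by `2X U_j = U_{j+1} + U_{j-1}` (with
`U_{-1} = 0`), so the coefficients of `(2X)^n` obey `c_{j,n+1} = c_{j-1,n} + c_{j+1,n}`.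
The ballot-type differences `C(n, k) - C(n, k+1)` satisfy this Pascal-type recurrence, and
at `j = 0` the missing term `c_{-1,n}` is `C(n, m) - C(n, m+1) = 0` for `n = 2m + 1`.
-/

namespace Polynomial.Chebyshev

variable {R : Type*} [CommRing R]

theorem two_mul_X_mul_U (j : ℤ) : 2 * X * U R j = U R (j + 1) + U R (j - 1) := by
  rw [U_add_one]
  ring

theorem two_mul_X_mul_sum_C_mul_U {m : ℕ} (a : ℕ → R) (ha : ∀ j, m < j → a j = 0) :
    2 * X * ∑ j ∈ Finset.range (m + 1), Polynomial.C (a j) * U R j =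
      Polynomial.C (a 1) * U R 0 +
        ∑ j ∈ Finset.range (m + 1), Polynomial.C (a j + a (j + 2)) * U R (j + 1) := by
  have lower : ∑ j ∈ Finset.range (m + 1), Polynomial.C (a j) * U R ((j : ℤ) - 1) =
      Polynomial.C (a 1) * U R 0 +
        ∑ j ∈ Finset.range (m + 1), Polynomial.C (a (j + 2)) * U R (j + 1) := by
    have extend := Finset.sum_range_succ' (fun j ↦ Polynomial.C (a (j + 1)) * U R j) (m + 1)
    rw [Finset.sum_range_succ, Finset.sum_range_succ, ha (m + 1) (by omega),
      ha (m + 1 + 1) (by omega)] at extend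
    simp only [map_zero, zero_mul, add_zero, Nat.cast_add, Nat.cast_one, Nat.cast_zero] at extend
    rw [Finset.sum_range_succ', Nat.cast_zero, zero_sub, U_neg_one, mul_zero, add_zero]
    simpa only [Nat.cast_add, Nat.cast_one, add_sub_cancel_right, add_assoc, add_comm _ (_ * _)]
      using extend
  simp only [Finset.mul_sum, mul_left_comm (2 * X : R[X]), two_mul_X_mul_U, mul_add,
    Finset.sum_add_distrib, lower, map_add, add_mul]
  ring

end Polynomial.Chebyshev

theorem chebCoeff_eq_zero {j n : ℕ} (h : n < j) : chebCoeff j n = 0 := by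
  unfold chebCoeff
  split_ifs
  · rw [Nat.choose_eq_zero_of_lt (by omega), Nat.choose_eq_zero_of_lt (by omega), sub_self]
  · rfl

theorem choose_sub_choose_succ_succ (n k : ℕ) :
    ((n + 1).choose (k + 1) - (n + 1).choose (k + 2) : ℝ) =
      (n.choose k - n.choose (k + 1)) + (n.choose (k + 1) - n.choose (k + 2)) := by
  rw [Nat.choose_succ_succ' n k, Nat.choose_succ_succ' n (k + 1)]
  push_cast
  ring

theorem chebCoeff_succ_succ (j n : ℕ) :
    chebCoeff (j + 1) (n + 1) = chebCoeff j n + chebCoeff (j + 2) n := by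
  unfold chebCoeff
  by_cases hp : (n + j) % 2 = 0
  · obtain ⟨m, hm⟩ : ∃ m, n + j = 2 * m := ⟨(n + j) / 2, by omega⟩
    rw [if_pos (by omega), if_pos hp, if_pos (by omega),
      show (n + 1 + (j + 1)) / 2 = m + 1 by omega, show (n + j) / 2 = m by omega,
      show (n + (j + 2)) / 2 = m + 1 by omega, choose_sub_choose_succ_succ]
  · rw [if_neg (by omega), if_neg hp, if_neg (by omega), add_zero]

theorem chebCoeff_zero_succ (n : ℕ) : chebCoeff 0 (n + 1) = chebCoeff 1 n := by
  unfold chebCoeff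
  by_cases hp : (n + 1) % 2 = 0
  · obtain ⟨m, rfl⟩ : ∃ m, n = 2 * m + 1 := ⟨n / 2, by omega⟩
    rw [if_pos (by omega), if_pos (by omega), show (2 * m + 1 + 1 + 0) / 2 = m + 1 by omega,
      choose_sub_choose_succ_succ, Nat.choose_symm_half, sub_self, zero_add]
  · rw [if_neg (by omega), if_neg (by omega)]

/-- For every `n ≥ 0` one has
`(2X)^n = ∑_{j=0}^{n} c_{j,n} U_j(X)` in `ℝ[X]`, where `U_j` is the `j`-th Chebyshev
polynomial of the second kind. -/
theorem stmt4 (n : ℕ) :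
    (2 * X : ℝ[X]) ^ n =
      ∑ j ∈ Finset.range (n + 1), C (chebCoeff j n) * Polynomial.Chebyshev.U ℝ (j : ℤ) := by
  induction n with
  | zero => simp [chebCoeff]
  | succ n ih =>
    rw [pow_succ', ih, Polynomial.Chebyshev.two_mul_X_mul_sum_C_mul_U _
      fun j hj => chebCoeff_eq_zero hj, Finset.sum_range_succ' _ (n + 1), chebCoeff_zero_succ]
    simp only [chebCoeff_succ_succ, Nat.cast_add, Nat.cast_one, Nat.cast_zero]
    ring
end

section
/- For every real number x > 0 and every integer n ≥ 0, Σ_{j=0}^{n} c_{j,n} x^j ≤ (x + x^{−1})^n. -/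
/-!
Multiplying by `xⁿ`, the claim becomes `∑ⱼ c_{j,n} x^{n+j} ≤ (1 + x²)ⁿ = ∑ₘ C(n,m) x^{2m}`.
Each nonzero term on the left is at most `C(n,m) x^{2m}` with `m = (n+j)/2`, and distinct
such `j` give distinct `m`, so the left side is dominated by part of the binomial expansion.
-/

open Finset

theorem sum_range_ite_even_le {M : Type*} [AddCommMonoid M] [PartialOrder M]
    [IsOrderedAddMonoid M] (n : ℕ) (f : ℕ → M) (hf : ∀ m ∈ range (n + 1), 0 ≤ f m) :
    ∑ j ∈ range (n + 1), (if (n + j) % 2 = 0 then f ((n + j) / 2) else 0) ≤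
      ∑ m ∈ range (n + 1), f m := by
  set S := (range (n + 1)).filter fun j => (n + j) % 2 = 0
  have hinj : Set.InjOn (fun j => (n + j) / 2) S := by
    intro a ha b hb hab
    simp only [S, coe_filter, mem_range, Set.mem_ofPred_eq] at ha hb hab
    omega
  have hsub : S.image (fun j => (n + j) / 2) ⊆ range (n + 1) := by
    intro m hm
    simp only [S, mem_image, mem_filter, mem_range] at hm ⊢
    omega
  calc ∑ j ∈ range (n + 1), (if (n + j) % 2 = 0 then f ((n + j) / 2) else 0)
      = ∑ m ∈ S.image (fun j => (n + j) / 2), f m := by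
        rw [← sum_filter, sum_image hinj]
    _ ≤ ∑ m ∈ range (n + 1), f m :=
        sum_le_sum_of_subset_of_nonneg hsub fun m hm _ => hf m hm

theorem chebCoeff_mul_pow_add_le {y : ℝ} (hy : 0 ≤ y) (j n : ℕ) :
    chebCoeff j n * y ^ (n + j) ≤
      if (n + j) % 2 = 0 then (n.choose ((n + j) / 2) : ℝ) * (y ^ 2) ^ ((n + j) / 2)
      else 0 := by
  unfold chebCoeff
  split_ifs with h
  · rw [← pow_mul, Nat.mul_div_cancel' (Nat.dvd_of_mod_eq_zero h)]
    gcongr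
    exact sub_le_self _ (Nat.cast_nonneg _)
  · simp

/-- For every real `x > 0` and every integer `n ≥ 0`,
`∑_{j=0}^{n} c_{j,n} x^j ≤ (x + x⁻¹)^n`. -/
theorem stmt8 (x : ℝ) (hx : 0 < x) (n : ℕ) :
    ∑ j ∈ Finset.range (n + 1), chebCoeff j n * x ^ j ≤ (x + x⁻¹) ^ n := by
  rw [← mul_le_mul_iff_of_pos_right (pow_pos hx n)]
  calc (∑ j ∈ range (n + 1), chebCoeff j n * x ^ j) * x ^ n
      = ∑ j ∈ range (n + 1), chebCoeff j n * x ^ (n + j) := by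
        rw [sum_mul]
        exact sum_congr rfl fun j _ => by ring
    _ ≤ ∑ j ∈ range (n + 1), if (n + j) % 2 = 0 then
          (n.choose ((n + j) / 2) : ℝ) * (x ^ 2) ^ ((n + j) / 2) else 0 :=
        sum_le_sum fun j _ => chebCoeff_mul_pow_add_le hx.le j n
    _ ≤ ∑ m ∈ range (n + 1), (n.choose m : ℝ) * (x ^ 2) ^ m :=
        sum_range_ite_even_le n (fun m => (n.choose m : ℝ) * (x ^ 2) ^ m) fun m _ => by positivity
    _ = (x + x⁻¹) ^ n * x ^ n := by
        rw [← mul_pow, add_mul, inv_mul_cancel₀ hx.ne', ← sq, add_pow]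
        exact sum_congr rfl fun m _ => by ring
end

section
/- Let γ ≥ 0 be a real number and ℓ a positive integer. Then Σ_{d | ℓ} c_ℓ(d) · d^γ ≤ ∏_{p | ℓ, p prime} (p^{−γ} + p^γ)^{v_p(ℓ)}, where v_p denotes the p-adic valuation. -/
/-- For `d ∣ ℓ`, `c_ℓ(d) = ∏_{p ∣ ℓ} c_{v_p(d), v_p(ℓ)}`, where `v_p` is the `p`-adic
valuation. -/
noncomputable def chebCoeffProd (ℓ d : ℕ) : ℝ :=
  ∏ p ∈ ℓ.primeFactors, chebCoeff (d.factorization p) (ℓ.factorization p)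

open Finset

theorem Finset.sum_finsupp_prod {ι α β : Type*} [Zero α] [CommSemiring β]
    (s : Finset ι) (t : ι → Finset α) (g : ι → α → β) :
    ∑ f ∈ s.finsupp t, ∏ i ∈ s, g i (f i) = ∏ i ∈ s, ∑ a ∈ t i, g i a := by
  classical
  rw [Finset.prod_sum, Finset.finsupp, sum_map]
  refine sum_congr rfl fun x _ => ?_
  rw [← prod_attach s]
  simp only [Function.Embedding.coeFn_mk, Finsupp.indicator_apply, SetLike.coe_mem, ↓reduceDIte]

theorem Finsupp.Iic_eq_finsupp {ι α : Type*} [AddCommMonoid α] [PartialOrder α]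
    [IsBotZeroClass α] [OrderBot α] [LocallyFiniteOrder α] [DecidableEq ι] [DecidableEq α]
    (f : ι →₀ α) :
    Iic f = f.support.finsupp fun i => Iic (f i) := by
  simp only [Iic_eq_Icc, bot_eq_zero, Finsupp.Icc_eq, support_zero, empty_union]
  rfl

theorem Nat.sum_divisors_prod_factorization {β : Type*} [CommSemiring β] {n : ℕ} (hn : n ≠ 0)
    (g : ℕ → ℕ → β) :
    ∑ d ∈ n.divisors, ∏ p ∈ n.primeFactors, g p (d.factorization p) =
      ∏ p ∈ n.primeFactors, ∑ j ∈ range (n.factorization p + 1), g p j := by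
  rw [divisors_eq_image_Iic_factorization_prod_pow hn,
    sum_image (Set.injOn_iff_injective.mpr (Iic_factorization_prod_pow_injective n))]
  simp only [range_succ_eq_Iic, ← support_factorization, ← sum_finsupp_prod,
    ← Finsupp.Iic_eq_finsupp]
  refine sum_congr rfl fun f hf => ?_
  rw [factorization_prod_pow_eq_self_of_le_factorization (mem_Iic.mp hf)]

theorem Nat.cast_rpow_eq_prod_primeFactors {n d : ℕ} (hn : n ≠ 0) (hd : d ∣ n) (γ : ℝ) :
    (d : ℝ) ^ γ = ∏ p ∈ n.primeFactors, ((p : ℝ) ^ γ) ^ d.factorization p := by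
  have hd0 : d ≠ 0 := ne_zero_of_dvd_ne_zero hn hd
  rw [← prod_subset (primeFactors_mono hd hn) fun p _ hp => by
      rw [← support_factorization, Finsupp.notMem_support_iff] at hp
      rw [hp, pow_zero]]
  conv_lhs => rw [prod_primeFactors_pow_factorization hd0]
  push_cast
  rw [← Real.finsetProd_rpow _ _ fun p _ => by positivity]
  refine prod_congr rfl fun p _ => ?_
  rw [← Real.rpow_natCast, ← Real.rpow_natCast, ← Real.rpow_mul (by positivity),
    ← Real.rpow_mul (by positivity), mul_comm]

section Chebyshev

theorem sum_chebCoeff_mul_pow (n : ℕ) (t : ℝ) :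
    ∑ j ∈ range (n + 1), chebCoeff j n * t ^ j =
      ∑ k ∈ range (n / 2 + 1), (n.choose k : ℝ) * t ^ (n - 2 * k) -
        ∑ k ∈ range (n / 2), (n.choose k : ℝ) * t ^ (n - 2 * k - 2) := by
  have hreindex : ∑ j ∈ range (n + 1), chebCoeff j n * t ^ j =
      ∑ k ∈ range (n / 2 + 1), ((n.choose k : ℝ) - n.choose (n - k + 1)) * t ^ (n - 2 * k) := by
    rw [← sum_filter_of_ne (p := fun j => (n + j) % 2 = 0) fun j _ h => by
      by_contra hodd; simp [chebCoeff, hodd] at h]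
    refine sum_nbij' (fun j => (n - j) / 2) (fun k => n - 2 * k) ?_ ?_ ?_ ?_ ?_
    · intro j hj
      simp only [mem_filter, mem_range] at hj ⊢
      omega
    · intro k hk
      simp only [mem_filter, mem_range] at hk ⊢
      omega
    · intro j hj
      simp only [mem_filter, mem_range] at hj
      omega
    · intro k hk
      simp only [mem_range] at hk
      omega
    · intro j hj
      simp only [mem_filter, mem_range] at hj
      rw [chebCoeff, if_pos hj.2,
        Nat.choose_symm_of_eq_add (by omega : n = (n + j) / 2 + (n - j) / 2),
        show n - 2 * ((n - j) / 2) = j by omega,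
        show n - (n - j) / 2 + 1 = (n + j) / 2 + 1 by omega]
  -- `C(n, n - k + 1) = C(n, k - 1)` for `k ≥ 1`, and it vanishes at `k = 0`
  have hshift : ∑ k ∈ range (n / 2 + 1), (n.choose (n - k + 1) : ℝ) * t ^ (n - 2 * k) =
      ∑ k ∈ range (n / 2), (n.choose k : ℝ) * t ^ (n - 2 * k - 2) := by
    rw [sum_range_succ', Nat.choose_eq_zero_of_lt (by omega : n < n - 0 + 1), Nat.cast_zero,
      zero_mul, add_zero]
    refine sum_congr rfl fun k hk => ?_
    rw [mem_range] at hk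
    rw [Nat.choose_symm_of_eq_add (by omega : n = n - (k + 1) + 1 + k),
      show n - 2 * (k + 1) = n - 2 * k - 2 by omega]
  rw [hreindex, ← hshift, ← sum_sub_distrib]
  exact sum_congr rfl fun k _ => sub_mul _ _ _

variable {n : ℕ} {t : ℝ}

theorem sum_choose_mul_pow_sub_two_le (ht : 1 ≤ t) :
    ∑ k ∈ range (n / 2), (n.choose k : ℝ) * t ^ (n - 2 * k - 2) ≤
      ∑ k ∈ range (n / 2 + 1), (n.choose k : ℝ) * t ^ (n - 2 * k) :=
  calc ∑ k ∈ range (n / 2), (n.choose k : ℝ) * t ^ (n - 2 * k - 2)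
      ≤ ∑ k ∈ range (n / 2), (n.choose k : ℝ) * t ^ (n - 2 * k) :=
        sum_le_sum fun k _ =>
          mul_le_mul_of_nonneg_left (pow_le_pow_right₀ ht (Nat.sub_le _ _)) (by positivity)
    _ ≤ ∑ k ∈ range (n / 2 + 1), (n.choose k : ℝ) * t ^ (n - 2 * k) :=
        sum_le_sum_of_subset_of_nonneg (range_subset_range.mpr (Nat.le_succ _))
          fun k _ _ => by positivity

theorem sum_choose_mul_pow_le_inv_add_pow (ht : 0 < t) :
    ∑ k ∈ range (n / 2 + 1), (n.choose k : ℝ) * t ^ (n - 2 * k) ≤ (t⁻¹ + t) ^ n := by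
  rw [add_pow]
  calc ∑ k ∈ range (n / 2 + 1), (n.choose k : ℝ) * t ^ (n - 2 * k)
      = ∑ k ∈ range (n / 2 + 1), t⁻¹ ^ k * t ^ (n - k) * n.choose k := by
        refine sum_congr rfl fun k hk => ?_
        rw [mem_range] at hk
        have hpow : t ^ (n - 2 * k) * t ^ k = t ^ (n - k) := by
          rw [← pow_add, show n - 2 * k + k = n - k by omega]
        rw [inv_pow, ← hpow]
        field_simp
    _ ≤ _ :=
        sum_le_sum_of_subset_of_nonneg (range_subset_range.mpr (by omega))
          fun k _ _ => by positivity

theorem sum_chebCoeff_mul_pow_nonneg (ht : 1 ≤ t) :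
    0 ≤ ∑ j ∈ range (n + 1), chebCoeff j n * t ^ j := by
  rw [sum_chebCoeff_mul_pow, sub_nonneg]
  exact sum_choose_mul_pow_sub_two_le ht

theorem sum_chebCoeff_mul_pow_le (ht : 1 ≤ t) :
    ∑ j ∈ range (n + 1), chebCoeff j n * t ^ j ≤ (t⁻¹ + t) ^ n := by
  have hneg : 0 ≤ ∑ k ∈ range (n / 2), (n.choose k : ℝ) * t ^ (n - 2 * k - 2) :=
    sum_nonneg fun k _ => by positivity
  rw [sum_chebCoeff_mul_pow]
  linarith [sum_choose_mul_pow_le_inv_add_pow (n := n) (by linarith : 0 < t)]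

end Chebyshev

/-- For every real `γ ≥ 0` and every positive integer `ℓ`,
`∑_{d ∣ ℓ} c_ℓ(d) d^γ ≤ ∏_{p ∣ ℓ} (p^{-γ} + p^γ)^{v_p(ℓ)}`. -/
theorem stmt9 (γ : ℝ) (hγ : 0 ≤ γ) (ℓ : ℕ) (hℓ : 0 < ℓ) :
    ∑ d ∈ ℓ.divisors, chebCoeffProd ℓ d * (d : ℝ) ^ γ ≤
      ∏ p ∈ ℓ.primeFactors, ((p : ℝ) ^ (-γ) + (p : ℝ) ^ γ) ^ (ℓ.factorization p) := by
  have hsummand : ∀ d ∈ ℓ.divisors, chebCoeffProd ℓ d * (d : ℝ) ^ γ =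
      ∏ p ∈ ℓ.primeFactors,
        chebCoeff (d.factorization p) (ℓ.factorization p) * ((p : ℝ) ^ γ) ^ d.factorization p :=
    fun d hd => by
      rw [chebCoeffProd, prod_mul_distrib,
        Nat.cast_rpow_eq_prod_primeFactors hℓ.ne' (Nat.dvd_of_mem_divisors hd)]
  rw [sum_congr rfl hsummand, Nat.sum_divisors_prod_factorization hℓ.ne'
    fun p j => chebCoeff j (ℓ.factorization p) * ((p : ℝ) ^ γ) ^ j]
  have hp : ∀ p ∈ ℓ.primeFactors, 1 ≤ (p : ℝ) ^ γ := fun p hp =>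
    Real.one_le_rpow (by exact_mod_cast (Nat.prime_of_mem_primeFactors hp).one_le) hγ
  refine prod_le_prod (fun p hp' => sum_chebCoeff_mul_pow_nonneg (hp p hp')) fun p hp' => ?_
  rw [Real.rpow_neg (Nat.cast_nonneg p)]
  exact sum_chebCoeff_mul_pow_le (hp p hp')
end

section
/- Let γ₀ = log(3/2)/log 2 − 1/2. For every ε with 0 < ε < γ₀ there exists a constant C = C(ε) > 0 such that for every positive integer L and every real Y ≥ 1, Σ_{ℓ > Y, ℓ | L^∞} (ℓ^{1+ε} / ν(ℓ)²) · (Σ_{d | ℓ} c_ℓ(d))² ≤ C · Y^{−2γ₀ + 2ε} · τ(L), where the outer sum is over positive integers ℓ > Y all of whose prime factors divide L. -/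
/-- `ν` is the completely multiplicative function with `ν(p) = p + 1` for every prime `p`,
i.e. `ν(ℓ) = ∏_p (p+1)^{v_p(ℓ)}`. -/
def nuCM (ℓ : ℕ) : ℕ := ∏ p ∈ ℓ.primeFactors, (p + 1) ^ ℓ.factorization p

open Finset Real

lemma abs_chebCoeff_le (j n : ℕ) : |chebCoeff j n| ≤ 2 ^ n := by
  have hchoose (k : ℕ) : (n.choose k : ℝ) ≤ 2 ^ n := by exact_mod_cast n.choose_le_two_pow k
  unfold chebCoeff
  split_ifs
  · exact abs_sub_le_of_nonneg_of_le (by positivity) (hchoose _) (by positivity) (hchoose _)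
  · simp

lemma abs_sum_chebCoeffProd_le (ℓ : ℕ) :
    |∑ d ∈ ℓ.divisors, chebCoeffProd ℓ d|
      ≤ #ℓ.divisors * ∏ p ∈ ℓ.primeFactors, (2 : ℝ) ^ ℓ.factorization p := by
  calc |∑ d ∈ ℓ.divisors, chebCoeffProd ℓ d|
      ≤ ∑ d ∈ ℓ.divisors, |chebCoeffProd ℓ d| := abs_sum_le_sum_abs _ _
    _ ≤ ∑ _d ∈ ℓ.divisors, ∏ p ∈ ℓ.primeFactors, (2 : ℝ) ^ ℓ.factorization p := by
      gcongr with d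
      rw [chebCoeffProd, abs_prod]
      exact prod_le_prod (fun _ _ => abs_nonneg _) fun _ _ => abs_chebCoeff_le _ _
    _ = _ := by rw [sum_const, nsmul_eq_mul]

/-- With `p = 2 ^ t`, this is the convexity inequality `3 ^ t ≤ (2 ^ t + 4 ^ t) / 2` for `t ≥ 1`. -/
lemma two_mul_rpow_logb_le {p : ℝ} (hp : 2 ≤ p) : 2 * p ^ logb 2 (3 / 2) ≤ p + 1 := by
  have hp0 : 0 < p := by linarith
  set t := logb 2 p
  have ht : 1 ≤ t := by
    rw [le_logb_iff_rpow_le (by norm_num) hp0]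
    simpa using hp
  have h2t : (2 : ℝ) ^ t = p := rpow_logb (by norm_num) (by norm_num) hp0
  have hconv : (3 : ℝ) ^ t ≤ ((2 : ℝ) ^ t + (4 : ℝ) ^ t) / 2 := by
    have h := (convexOn_rpow ht).2 (Set.mem_Ici.mpr (by norm_num : (0 : ℝ) ≤ 2))
      (Set.mem_Ici.mpr (by norm_num : (0 : ℝ) ≤ 4)) (by norm_num : (0 : ℝ) ≤ 1 / 2)
      (by norm_num : (0 : ℝ) ≤ 1 / 2) (by norm_num)
    norm_num at h
    linarith
  have hpow : p ^ logb 2 (3 / 2) = (3 : ℝ) ^ t / p := by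
    rw [← h2t, ← rpow_mul (by norm_num), mul_comm, rpow_mul (by norm_num),
      rpow_logb (by norm_num) (by norm_num) (by norm_num), div_rpow (by norm_num) (by norm_num)]
  have h4t : (4 : ℝ) ^ t = p * p := by
    rw [show (4 : ℝ) = 2 * 2 by norm_num, mul_rpow (by norm_num) (by norm_num), h2t]
  rw [h2t, h4t] at hconv
  rw [hpow, mul_div_assoc', div_le_iff₀ hp0]
  nlinarith

lemma natCast_rpow_eq_prod_primeFactors {ℓ : ℕ} (hℓ : ℓ ≠ 0) (r : ℝ) :
    (ℓ : ℝ) ^ r = ∏ p ∈ ℓ.primeFactors, ((p : ℝ) ^ r) ^ ℓ.factorization p := by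
  conv_lhs => rw [← Nat.prod_factorization_pow_eq_self hℓ, Finsupp.prod, Nat.support_factorization]
  push_cast
  rw [← finsetProd_rpow _ _ fun p _ => by positivity]
  exact prod_congr rfl fun p _ => (rpow_pow_comm p.cast_nonneg r _).symm

lemma rpow_logb_mul_prod_two_pow_le_nuCM {ℓ : ℕ} (hℓ : ℓ ≠ 0) :
    (ℓ : ℝ) ^ logb 2 (3 / 2) * ∏ p ∈ ℓ.primeFactors, (2 : ℝ) ^ ℓ.factorization p ≤ nuCM ℓ := by
  rw [natCast_rpow_eq_prod_primeFactors hℓ, ← prod_mul_distrib, nuCM]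
  push_cast
  refine prod_le_prod (fun p _ => by positivity) fun p hp => ?_
  rw [← mul_pow, mul_comm]
  have hp : (2 : ℝ) ≤ p := by exact_mod_cast (Nat.prime_of_mem_primeFactors hp).two_le
  exact pow_le_pow_left₀ (by positivity) (two_mul_rpow_logb_le hp) _

lemma summand_le_card_divisors_sq_mul_rpow (ε : ℝ) {ℓ : ℕ} (hℓ : ℓ ≠ 0) :
    (ℓ : ℝ) ^ (1 + ε) / (nuCM ℓ : ℝ) ^ 2 * (∑ d ∈ ℓ.divisors, chebCoeffProd ℓ d) ^ 2
      ≤ (#ℓ.divisors : ℝ) ^ 2 * (ℓ : ℝ) ^ (1 + ε - 2 * logb 2 (3 / 2)) := by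
  set β := logb 2 (3 / 2)
  set P := ∏ p ∈ ℓ.primeFactors, (2 : ℝ) ^ ℓ.factorization p
  have hℓ0 : (0 : ℝ) < ℓ := by positivity
  have hβ : 0 < (ℓ : ℝ) ^ β := rpow_pos_of_pos hℓ0 β
  have hν := rpow_logb_mul_prod_two_pow_le_nuCM hℓ
  have hP : P / nuCM ℓ ≤ 1 / (ℓ : ℝ) ^ β := by
    rw [div_le_div_iff₀ (by linarith [mul_pos hβ (by positivity : 0 < P)]) hβ]
    linarith
  have hsum : (∑ d ∈ ℓ.divisors, chebCoeffProd ℓ d) ^ 2 ≤ (#ℓ.divisors * P) ^ 2 := by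
    simpa only [sq_abs] using pow_le_pow_left₀ (abs_nonneg _) (abs_sum_chebCoeffProd_le ℓ) 2
  calc (ℓ : ℝ) ^ (1 + ε) / (nuCM ℓ : ℝ) ^ 2 * (∑ d ∈ ℓ.divisors, chebCoeffProd ℓ d) ^ 2
      ≤ (ℓ : ℝ) ^ (1 + ε) / (nuCM ℓ : ℝ) ^ 2 * (#ℓ.divisors * P) ^ 2 := by gcongr
    _ = (ℓ : ℝ) ^ (1 + ε) * (#ℓ.divisors : ℝ) ^ 2 * (P / nuCM ℓ) ^ 2 := by ring
    _ ≤ (ℓ : ℝ) ^ (1 + ε) * (#ℓ.divisors : ℝ) ^ 2 * (1 / (ℓ : ℝ) ^ β) ^ 2 := by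
        gcongr
    _ = (#ℓ.divisors : ℝ) ^ 2 * (ℓ : ℝ) ^ (1 + ε - 2 * β) := by
        rw [rpow_sub hℓ0, mul_comm 2 β, rpow_mul hℓ0.le, rpow_two]
        ring

lemma summable_sq_mul_geometric {x : ℝ} (hx0 : 0 ≤ x) (hx1 : x < 1) :
    Summable fun n : ℕ => ((n : ℝ) + 1) ^ 2 * x ^ n := by
  have hx : ‖x‖ < 1 := by rwa [norm_of_nonneg hx0]
  refine (((summable_pow_mul_geometric_of_norm_lt_one 2 hx).add
    ((summable_pow_mul_geometric_of_norm_lt_one 1 hx).mul_left 2)).add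
    (summable_pow_mul_geometric_of_norm_lt_one 0 hx)).congr fun n => ?_
  ring

lemma one_le_tsum_sq_mul_geometric {x : ℝ} (hx0 : 0 ≤ x) (hx1 : x < 1) :
    1 ≤ ∑' n : ℕ, ((n : ℝ) + 1) ^ 2 * x ^ n := by
  simpa using (summable_sq_mul_geometric hx0 hx1).le_tsum 0 fun n _ => by positivity

lemma tsum_sq_mul_geometric_mono {x y : ℝ} (hx0 : 0 ≤ x) (hxy : x ≤ y) (hy1 : y < 1) :
    ∑' n : ℕ, ((n : ℝ) + 1) ^ 2 * x ^ n ≤ ∑' n : ℕ, ((n : ℝ) + 1) ^ 2 * y ^ n :=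
  (summable_sq_mul_geometric hx0 (hxy.trans_lt hy1)).tsum_le_tsum
    (fun n => by gcongr) (summable_sq_mul_geometric (hx0.trans hxy) hy1)

lemma tsum_sq_mul_geometric_le_two {x : ℝ} (hx0 : 0 ≤ x) (hx : x ≤ 1 / 8) :
    ∑' n : ℕ, ((n : ℝ) + 1) ^ 2 * x ^ n ≤ 2 := by
  refine ((summable_sq_mul_geometric hx0 (by linarith)).tsum_le_tsum (fun n => ?_)
    summable_geometric_two).trans_eq tsum_geometric_two
  have hn : (n : ℝ) + 1 ≤ 2 ^ n := by exact_mod_cast Nat.lt_two_pow_self (n := n)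
  calc ((n : ℝ) + 1) ^ 2 * x ^ n ≤ ((2 : ℝ) ^ n) ^ 2 * x ^ n := by gcongr
    _ = (4 * x) ^ n := by rw [← pow_mul, mul_comm n, pow_mul, mul_pow]; norm_num
    _ ≤ (1 / 2) ^ n := by gcongr; linarith

lemma hasSum_card_divisors_sq_mul_rpow_neg {ε : ℝ} (hε : 0 < ε) (s : Finset ℕ) :
    HasSum (fun m : Nat.factoredNumbers s => (#(m : ℕ).divisors : ℝ) ^ 2 * ((m : ℕ) : ℝ) ^ (-ε))
      (∏ p ∈ s with p.Prime, ∑' n : ℕ, ((n : ℝ) + 1) ^ 2 * ((p : ℝ) ^ (-ε)) ^ n) := by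
  set f : ℕ → ℝ := fun m => (#m.divisors : ℝ) ^ 2 * (m : ℝ) ^ (-ε)
  have hprime_pow {p : ℕ} (hp : p.Prime) (n : ℕ) :
      f (p ^ n) = ((n : ℝ) + 1) ^ 2 * ((p : ℝ) ^ (-ε)) ^ n := by
    simp only [f, ← ArithmeticFunction.sigma_zero_apply,
      ArithmeticFunction.sigma_zero_apply_prime_pow hp]
    push_cast
    rw [rpow_pow_comm p.cast_nonneg]
  have hmul {m n : ℕ} (hmn : m.Coprime n) : f (m * n) = f m * f n := by
    simp only [f, hmn.card_divisors_mul]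
    push_cast
    rw [mul_rpow m.cast_nonneg n.cast_nonneg]
    ring
  have hsummable {p : ℕ} (hp : p.Prime) : Summable fun n => ‖f (p ^ n)‖ := by
    have hx1 : (p : ℝ) ^ (-ε) < 1 :=
      rpow_lt_one_of_one_lt_of_neg (by exact_mod_cast hp.one_lt) (neg_lt_zero.mpr hε)
    simpa only [hprime_pow hp, Real.norm_eq_abs]
      using (summable_sq_mul_geometric (by positivity) hx1).abs
  have h := (EulerProduct.summable_and_hasSum_factoredNumbers_prod_filter_prime_tsum
    (by simp [f]) hmul hsummable s).2
  rwa [prod_congr rfl fun p hp => tsum_congr fun n => hprime_pow (mem_filter.mp hp).2 n] at h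

lemma tsum_summand_le_rpow_mul_prod {ε Y : ℝ} (hε : 0 < ε)
    (hδ : 1 - 2 * logb 2 (3 / 2) + 2 * ε ≤ 0) (hY : 0 < Y) (S : Finset ℕ) :
    (∑' ℓ : ℕ, if 0 < ℓ ∧ Y < (ℓ : ℝ) ∧ ℓ.primeFactors ⊆ S then
        ((ℓ : ℝ) ^ (1 + ε) / (nuCM ℓ : ℝ) ^ 2) * (∑ d ∈ ℓ.divisors, chebCoeffProd ℓ d) ^ 2
      else 0)
      ≤ Y ^ (1 - 2 * logb 2 (3 / 2) + 2 * ε)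
        * ∏ p ∈ S with p.Prime, ∑' n : ℕ, ((n : ℝ) + 1) ^ 2 * ((p : ℝ) ^ (-ε)) ^ n := by
  set δ := 1 - 2 * logb 2 (3 / 2) + 2 * ε
  set g : ℕ → ℝ := fun ℓ => if 0 < ℓ ∧ Y < (ℓ : ℝ) ∧ ℓ.primeFactors ⊆ S then
      ((ℓ : ℝ) ^ (1 + ε) / (nuCM ℓ : ℝ) ^ 2) * (∑ d ∈ ℓ.divisors, chebCoeffProd ℓ d) ^ 2
    else 0
  have hEuler := (hasSum_card_divisors_sq_mul_rpow_neg hε S).mul_left (Y ^ δ)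
  have hsupport : Function.support g ⊆ Nat.factoredNumbers S := fun ℓ hℓ => by
    by_contra hℓS
    rw [Nat.mem_factoredNumbers_iff_primeFactors_subset] at hℓS
    exact hℓ (if_neg fun h => hℓS ⟨h.1.ne', h.2.2⟩)
  have hg0 (ℓ : ℕ) : 0 ≤ g ℓ := by
    simp only [g]
    split_ifs <;> positivity
  have hle (m : Nat.factoredNumbers S) :
      g m ≤ Y ^ δ * ((#(m : ℕ).divisors : ℝ) ^ 2 * ((m : ℕ) : ℝ) ^ (-ε)) := by
    simp only [g]
    split_ifs with h
    · obtain ⟨hm, hYm, -⟩ := h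
      calc _ ≤ (#(m : ℕ).divisors : ℝ) ^ 2 * ((m : ℕ) : ℝ) ^ (δ + -ε) := by
            convert summand_le_card_divisors_sq_mul_rpow ε hm.ne' using 3
            ring
        _ ≤ (#(m : ℕ).divisors : ℝ) ^ 2 * (Y ^ δ * ((m : ℕ) : ℝ) ^ (-ε)) := by
            rw [rpow_add (by positivity)]
            gcongr _ * (?_ * _)
            exact rpow_le_rpow_of_nonpos hY hYm.le hδ
        _ = _ := by ring
    · positivity
  rw [← hEuler.tsum_eq, ← tsum_subtype_eq_of_support_subset hsupport]
  have hsummable : Summable fun m : Nat.factoredNumbers S => g m :=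
    hEuler.summable.of_nonneg_of_le (fun m => hg0 m) hle
  exact hsummable.tsum_le_tsum hle hEuler.summable

lemma prod_le_pow_mul_pow_card {s : Finset ℕ} {F : ℕ → ℝ} {M c : ℝ} (N : ℕ)
    (hF : ∀ p ∈ s, 0 ≤ F p) (hM : ∀ p ∈ s, F p ≤ M) (hc : ∀ p ∈ s, N ≤ p → F p ≤ c)
    (hM1 : 1 ≤ M) (hc1 : 1 ≤ c) :
    ∏ p ∈ s, F p ≤ M ^ N * c ^ #s := by
  rw [← prod_filter_mul_prod_filter_not s (· < N)]
  have hsmall : #(s.filter (· < N)) ≤ N :=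
    (card_le_card fun p hp => mem_range.mpr (mem_filter.mp hp).2).trans (card_range N).le
  gcongr
  · exact prod_nonneg fun p hp => hF p (mem_filter.mp hp).1
  · calc ∏ p ∈ s with p < N, F p ≤ M ^ #(s.filter (· < N)) := by
          rw [← prod_const]
          exact prod_le_prod (fun p hp => hF p (mem_filter.mp hp).1)
            fun p hp => hM p (mem_filter.mp hp).1
      _ ≤ M ^ N := pow_le_pow_right₀ hM1 hsmall
  · calc ∏ p ∈ s with ¬p < N, F p ≤ c ^ #(s.filter (¬· < N)) := by
          rw [← prod_const]
          exact prod_le_prod (fun p hp => hF p (mem_filter.mp hp).1)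
            fun p hp => hc p (mem_filter.mp hp).1 (not_lt.mp (mem_filter.mp hp).2)
      _ ≤ c ^ #s := pow_le_pow_right₀ hc1 (card_filter_le _ _)

lemma two_pow_card_primeFactors_le_card_divisors {n : ℕ} (hn : n ≠ 0) :
    2 ^ #n.primeFactors ≤ #n.divisors := by
  rw [Nat.card_divisors hn]
  refine pow_card_le_prod _ _ _ fun p hp => ?_
  have := (Nat.support_factorization n ▸ Finsupp.mem_support_iff.mp) hp
  omega

/-- Let `γ₀ = log(3/2)/log 2 − 1/2`.  For every `0 < ε < γ₀` there is a
constant `C = C(ε) > 0` such that for every positive integer `L` and every real `Y ≥ 1`,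
`∑_{ℓ > Y, ℓ ∣ L^∞} (ℓ^{1+ε} / ν(ℓ)²) (∑_{d ∣ ℓ} c_ℓ(d))² ≤ C · Y^{−2γ₀+2ε} · τ(L)`,
where the sum is over positive integers `ℓ > Y` all of whose prime factors divide `L`,
and `τ(L)` is the number of divisors of `L`. -/
theorem stmt12 (ε : ℝ) (hε : 0 < ε) (hε' : ε < Real.log (3 / 2) / Real.log 2 - 1 / 2) :
    ∃ C : ℝ, 0 < C ∧ ∀ L : ℕ, 0 < L → ∀ Y : ℝ, 1 ≤ Y →
      (∑' ℓ : ℕ, if 0 < ℓ ∧ Y < (ℓ : ℝ) ∧ ℓ.primeFactors ⊆ L.primeFactors then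
          ((ℓ : ℝ) ^ (1 + ε) / (nuCM ℓ : ℝ) ^ 2) * (∑ d ∈ ℓ.divisors, chebCoeffProd ℓ d) ^ 2
        else 0)
      ≤ C * Y ^ (-2 * (Real.log (3 / 2) / Real.log 2 - 1 / 2) + 2 * ε) *
          (L.divisors.card : ℝ) := by
  rw [log_div_log] at hε' ⊢
  rw [show -2 * (logb 2 (3 / 2) - 1 / 2) + 2 * ε = 1 - 2 * logb 2 (3 / 2) + 2 * ε by ring]
  set F : ℕ → ℝ := fun p => ∑' n : ℕ, ((n : ℝ) + 1) ^ 2 * ((p : ℝ) ^ (-ε)) ^ n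
  have h2ε : (2 : ℝ) ^ (-ε) < 1 := rpow_lt_one_of_one_lt_of_neg one_lt_two (neg_lt_zero.mpr hε)
  have hF2 : 1 ≤ F 2 := one_le_tsum_sq_mul_geometric (by positivity) (by exact_mod_cast h2ε)
  obtain ⟨N, hN⟩ : ∃ N : ℕ, ∀ p ≥ N, (p : ℝ) ^ (-ε) ≤ 1 / 8 := Filter.eventually_atTop.mp <|
    ((tendsto_rpow_neg_atTop hε).comp tendsto_natCast_atTop_atTop).eventually
      (ge_mem_nhds (by norm_num))
  refine ⟨F 2 ^ N, by positivity, fun L hL Y hY => ?_⟩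
  have hpL (p : ℕ) (hp : p ∈ L.primeFactors) : (p : ℝ) ^ (-ε) ≤ (2 : ℝ) ^ (-ε) :=
    rpow_le_rpow_of_nonpos two_pos (by exact_mod_cast (Nat.prime_of_mem_primeFactors hp).two_le)
      (neg_nonpos.mpr hε.le)
  calc _ ≤ Y ^ (1 - 2 * logb 2 (3 / 2) + 2 * ε) * ∏ p ∈ L.primeFactors with p.Prime, F p :=
        tsum_summand_le_rpow_mul_prod hε (by linarith) (by linarith) _
    _ = Y ^ (1 - 2 * logb 2 (3 / 2) + 2 * ε) * ∏ p ∈ L.primeFactors, F p := by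
        rw [filter_true_of_mem fun p hp => Nat.prime_of_mem_primeFactors hp]
    _ ≤ Y ^ (1 - 2 * logb 2 (3 / 2) + 2 * ε) * (F 2 ^ N * 2 ^ #L.primeFactors) := by
        gcongr
        refine prod_le_pow_mul_pow_card N (fun p _ => ?_) (fun p hp => ?_) (fun p hp hNp => ?_)
          hF2 one_le_two
        · exact tsum_nonneg fun n => by positivity
        · exact tsum_sq_mul_geometric_mono (by positivity) (hpL p hp) h2ε
        · exact tsum_sq_mul_geometric_le_two (by positivity) (hN p hNp)
    _ ≤ F 2 ^ N * Y ^ (1 - 2 * logb 2 (3 / 2) + 2 * ε) * #L.divisors := by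
        rw [mul_left_comm, ← mul_assoc]
        gcongr
        exact_mod_cast two_pow_card_primeFactors_le_card_divisors hL.ne'
end

section
/- Let A, B, c be positive integers and a₁, a₂, a₃ integers, and define G_{A,B}(a₁, a₂, a₃; c) = c^{−3} · Σ_{x₁, x₂, x₃ mod c} S(A·x₁·x₂, B·x₃; c) · e_c(a₁x₁ + a₂x₂ + a₃x₃). If gcd(B, c) ≠ gcd(a₃, c), or gcd(A, c) ∤ a₁, or gcd(A, c) ∤ a₂, then G_{A,B}(a₁, a₂, a₃; c) = 0. -/
/-- The additive character `e_c(t) = exp(2πi·t/c)`. -/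
noncomputable def eAdd (c : ℕ) (t : ℤ) : ℂ :=
  Complex.exp (2 * Real.pi * Complex.I * (t : ℂ) / (c : ℂ))

/-- The Kloosterman sum `S(m, n; c) = ∑_{u mod c, gcd(u,c)=1} e_c(m·u + n·u⁻¹)`, where
`u⁻¹` denotes the inverse of `u` modulo `c`. -/
noncomputable def kloostermanS (m n : ℤ) (c : ℕ) : ℂ :=
  ∑ u ∈ (Finset.range c).filter (fun u => Nat.Coprime u c),
    eAdd c (m * u + n * (ZMod.val ((u : ZMod c)⁻¹) : ℤ))

/-- The complete exponential sum
`G_{A,B}(a₁, a₂, a₃; c) = c⁻³ ∑_{x₁,x₂,x₃ mod c} S(A x₁ x₂, B x₃; c) e_c(a₁x₁ + a₂x₂ + a₃x₃)`. -/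
noncomputable def GAB (A B : ℕ) (a₁ a₂ a₃ : ℤ) (c : ℕ) : ℂ :=
  ((c : ℂ) ^ 3)⁻¹ *
    ∑ x₁ ∈ Finset.range c, ∑ x₂ ∈ Finset.range c, ∑ x₃ ∈ Finset.range c,
      kloostermanS ((A : ℤ) * x₁ * x₂) ((B : ℤ) * x₃) c *
        eAdd c (a₁ * x₁ + a₂ * x₂ + a₃ * x₃)

/-! Expanding the Kloosterman sum writes `G` as a sum over units `u` of complete character sums
whose phase `A x₁ x₂ u + B x₃ ū + a₁ x₁ + a₂ x₂ + a₃ x₃` (with `u ū ≡ 1 mod c`) is linear in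
each `xᵢ` separately.
Summing over `x₃` kills every term unless `c ∣ B ū + a₃`, and as `ū` is a unit mod `c` this
forces `gcd(B, c) = gcd(a₃, c)`. Summing over `x₁` kills every term unless `c ∣ A x₂ u + a₁`,
which forces `gcd(A, c) ∣ a₁`; the condition on `a₂` follows by the symmetry `x₁ ↔ x₂`. -/

open Finset

theorem eAdd_add (c : ℕ) (s t : ℤ) : eAdd c (s + t) = eAdd c s * eAdd c t := by
  simp only [eAdd, ← Complex.exp_add]
  push_cast
  ring_nf

theorem eAdd_eq_zpow (c : ℕ) (t : ℤ) :
    eAdd c t = Complex.exp (2 * Real.pi * Complex.I / c) ^ t := by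
  rw [eAdd, ← Complex.exp_int_mul]
  ring_nf

theorem sum_range_eAdd_mul_add_eq_zero {c : ℕ} {t : ℤ} (ht : ¬ (c : ℤ) ∣ t) (s : ℤ) :
    ∑ x ∈ range c, eAdd c (t * x + s) = 0 := by
  rcases Nat.eq_zero_or_pos c with rfl | hc
  · simp
  have hζ := Complex.isPrimitiveRoot_exp c hc.ne'
  set z := Complex.exp (2 * Real.pi * Complex.I / c) ^ t
  have hz : z ≠ 1 := by rwa [Ne, hζ.zpow_eq_one_iff_dvd]
  have hzc : z ^ c = 1 := by
    rw [← zpow_natCast, ← zpow_mul, hζ.zpow_eq_one_iff_dvd]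
    exact dvd_mul_left _ _
  calc ∑ x ∈ range c, eAdd c (t * x + s) = (∑ x ∈ range c, z ^ x) * eAdd c s := by
        rw [sum_mul]
        refine sum_congr rfl fun x _ => ?_
        rw [eAdd_add, eAdd_eq_zpow c (t * x), zpow_mul, zpow_natCast]
    _ = 0 := by rw [geom_sum_eq hz, hzc, sub_self, zero_div, zero_mul]

theorem Nat.Coprime.val_inv_natCast {c u : ℕ} (hu : u.Coprime c) :
    ((u : ZMod c)⁻¹).val.Coprime c := by
  rw [← ZMod.coe_unitOfCoprime u hu, ZMod.inv_coe_unit]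
  exact ZMod.val_coe_unit_coprime _

theorem Nat.gcd_eq_gcd_of_dvd_mul_add {B c w : ℕ} {a : ℤ} (hw : w.Coprime c)
    (h : (c : ℤ) ∣ B * w + a) : Nat.gcd B c = Int.gcd a c := by
  obtain ⟨k, hk⟩ := h
  rw [show a = c * k - (B * w : ℕ) by push_cast; linarith, Int.gcd_mul_left_sub_left,
    Int.gcd_natCast_natCast, hw.gcd_mul_right_cancel]

theorem not_dvd_mul_add_of_not_gcd_dvd {A c : ℕ} {a : ℤ} (h : ¬ (Nat.gcd A c : ℤ) ∣ a)
    (y : ℤ) : ¬ (c : ℤ) ∣ A * y + a := fun hc =>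
  h <| (dvd_add_right (Int.natCast_dvd_natCast.mpr (Nat.gcd_dvd_left A c) |>.mul_right y)).mp
    ((Int.natCast_dvd_natCast.mpr (Nat.gcd_dvd_right A c)).trans hc)

theorem kloostermanS_mul_eAdd (m n s : ℤ) (c : ℕ) :
    kloostermanS m n c * eAdd c s = ∑ u ∈ (range c).filter (fun u => u.Coprime c),
      eAdd c (m * u + n * ((u : ZMod c)⁻¹).val + s) := by
  rw [kloostermanS, sum_mul]
  exact sum_congr rfl fun u _ => (eAdd_add c _ _).symm

theorem GAB_swap (A B : ℕ) (a₁ a₂ a₃ : ℤ) (c : ℕ) :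
    GAB A B a₁ a₂ a₃ c = GAB A B a₂ a₁ a₃ c := by
  rw [GAB, GAB, sum_comm]
  congr 1
  refine sum_congr rfl fun x₂ _ => sum_congr rfl fun x₁ _ => sum_congr rfl fun x₃ _ => ?_
  ring_nf

section

variable {A B c : ℕ} {a₁ a₂ a₃ : ℤ}

theorem GAB_eq_zero_of_not_gcd_dvd (h : ¬ (Nat.gcd A c : ℤ) ∣ a₁) :
    GAB A B a₁ a₂ a₃ c = 0 := by
  rw [GAB, sum_comm, mul_eq_zero]
  refine .inr <| sum_eq_zero fun x₂ _ => ?_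
  rw [sum_comm]
  refine sum_eq_zero fun x₃ _ => ?_
  simp_rw [kloostermanS_mul_eAdd]
  rw [sum_comm]
  refine sum_eq_zero fun u _ => ?_
  have hlin : ∀ x₁ : ℕ, (A : ℤ) * x₁ * x₂ * u + B * x₃ * ((u : ZMod c)⁻¹).val
      + (a₁ * x₁ + a₂ * x₂ + a₃ * x₃)
      = (A * (x₂ * u) + a₁) * x₁ + (B * x₃ * ((u : ZMod c)⁻¹).val + a₂ * x₂ + a₃ * x₃) :=
    fun _ => by ring
  simp_rw [hlin]
  exact sum_range_eAdd_mul_add_eq_zero (not_dvd_mul_add_of_not_gcd_dvd h _) _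

theorem GAB_eq_zero_of_gcd_ne (h : Nat.gcd B c ≠ Int.gcd a₃ c) :
    GAB A B a₁ a₂ a₃ c = 0 := by
  rw [GAB, mul_eq_zero]
  refine .inr <| sum_eq_zero fun x₁ _ => sum_eq_zero fun x₂ _ => ?_
  simp_rw [kloostermanS_mul_eAdd]
  rw [sum_comm]
  refine sum_eq_zero fun u hu => ?_
  have hlin : ∀ x₃ : ℕ, (A : ℤ) * x₁ * x₂ * u + B * x₃ * ((u : ZMod c)⁻¹).val
      + (a₁ * x₁ + a₂ * x₂ + a₃ * x₃)
      = (B * ((u : ZMod c)⁻¹).val + a₃) * x₃ + (A * x₁ * x₂ * u + a₁ * x₁ + a₂ * x₂) :=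
    fun _ => by ring
  simp_rw [hlin]
  have hinv := (mem_filter.mp hu).2.val_inv_natCast
  exact sum_range_eAdd_mul_add_eq_zero
    (fun hdvd => h (Nat.gcd_eq_gcd_of_dvd_mul_add hinv hdvd)) _

end

theorem stmt17_general (A B c : ℕ) (a₁ a₂ a₃ : ℤ)
    (h : Nat.gcd B c ≠ Int.gcd a₃ (c : ℤ) ∨ ¬ ((Nat.gcd A c : ℤ) ∣ a₁) ∨
      ¬ ((Nat.gcd A c : ℤ) ∣ a₂)) :
    GAB A B a₁ a₂ a₃ c = 0 := by
  rcases h with h₃ | h₁ | h₂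
  · exact GAB_eq_zero_of_gcd_ne h₃
  · exact GAB_eq_zero_of_not_gcd_dvd h₁
  · rw [GAB_swap]
    exact GAB_eq_zero_of_not_gcd_dvd h₂

/-- Let `A, B, c` be positive integers and `a₁, a₂, a₃` integers.  If
`gcd(B, c) ≠ gcd(a₃, c)`, or `gcd(A, c) ∤ a₁`, or `gcd(A, c) ∤ a₂`, then
`G_{A,B}(a₁, a₂, a₃; c) = 0`.  (By convention `gcd(0, c) = c`.) -/
theorem stmt17 (A B c : ℕ) (hA : 0 < A) (hB : 0 < B) (hc : 0 < c) (a₁ a₂ a₃ : ℤ)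
    (h : Nat.gcd B c ≠ Int.gcd a₃ (c : ℤ) ∨ ¬ ((Nat.gcd A c : ℤ) ∣ a₁) ∨
      ¬ ((Nat.gcd A c : ℤ) ∣ a₂)) :
    GAB A B a₁ a₂ a₃ c = 0 :=
  stmt17_general A B c a₁ a₂ a₃ h
end

section
/- For every ε > 0 there exists a constant C = C(ε) > 0 such that for all positive integers D and Q, Σ_{n ≥ 1, rad(n) | D} gcd(n, Q)/n ≤ C · (D·Q)^ε, where the sum is over all positive integers n every prime factor of which divides D (including n = 1), and this series converges. -/
/-!
The summand `n ↦ gcd(n, Q)/n` is multiplicative, so the series is the Euler product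
`∏_{p ∣ D} ∑_k gcd(p^k, Q)/p^k`. Writing `a = v_p(Q)`, the `k`-th local term is at most
`2^{-(k-a)⁺}`, so the local factor is at most `a + 2`. Finally `a + 2 ≤ w_p · (p^{a+1})^ε`
by Bernoulli's inequality, where `w_p = 1` for all but the finitely many primes with
`p^ε < 2`, and `∏_{p ∣ D} p^{a+1}` divides `DQ`.
-/

open Finset

theorem hasSum_ite_primeFactors_subset {R : Type*} [NormedCommRing R] [CompleteSpace R]
    {f : ℕ → R} (hf₁ : f 1 = 1) (hmul : ∀ {m n}, Nat.Coprime m n → f (m * n) = f m * f n)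
    (hsum : ∀ {p : ℕ}, p.Prime → Summable (fun k : ℕ ↦ ‖f (p ^ k)‖)) (s : Finset ℕ) :
    HasSum (fun n ↦ if 0 < n ∧ n.primeFactors ⊆ s then f n else 0)
      (∏ p ∈ s with p.Prime, ∑' k : ℕ, f (p ^ k)) := by
  have heuler := (EulerProduct.summable_and_hasSum_factoredNumbers_prod_filter_prime_tsum
    hf₁ hmul hsum s).2
  rw [← Function.comp_def, hasSum_subtype_iff_indicator] at heuler
  convert heuler using 2 with n
  simp [Set.indicator, Nat.mem_factoredNumbers_iff_primeFactors_subset, Nat.pos_iff_ne_zero]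

theorem gcd_mul_div_mul_of_coprime (Q : ℕ) {m n : ℕ} (h : Nat.Coprime m n) :
    ((m * n).gcd Q : ℝ) / (m * n : ℕ) = ((m.gcd Q : ℝ) / m) * ((n.gcd Q : ℝ) / n) := by
  rw [Nat.gcd_comm, Nat.Coprime.gcd_mul Q h, Nat.gcd_comm Q m, Nat.gcd_comm Q n]
  push_cast
  rw [mul_div_mul_comm]

-- `k - Q.factorization p` is truncated, so the bound is `1` for `k ≤ v_p(Q)`.
theorem gcd_prime_pow_div_le {p Q : ℕ} (hp : p.Prime) (hQ : Q ≠ 0) (k : ℕ) :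
    ((p ^ k).gcd Q : ℝ) / (p ^ k : ℕ) ≤ 2⁻¹ ^ (k - Q.factorization p) := by
  obtain ⟨j, hjk, hj⟩ := (Nat.dvd_prime_pow hp).1 (Nat.gcd_dvd_left (p ^ k) Q)
  have hjQ : j ≤ Q.factorization p :=
    (hp.pow_dvd_iff_le_factorization hQ).1 (hj ▸ Nat.gcd_dvd_right _ _)
  have hp0 : (p : ℝ) ≠ 0 := by exact_mod_cast hp.ne_zero
  calc ((p ^ k).gcd Q : ℝ) / (p ^ k : ℕ) = (p : ℝ)⁻¹ ^ (k - j) := by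
        obtain ⟨i, rfl⟩ := Nat.exists_eq_add_of_le hjk
        rw [hj, Nat.add_sub_cancel_left]
        push_cast
        rw [pow_add, inv_pow, div_mul_cancel_left₀ (pow_ne_zero _ hp0)]
    _ ≤ 2⁻¹ ^ (k - j) := by
        gcongr
        exact_mod_cast hp.two_le
    _ ≤ 2⁻¹ ^ (k - Q.factorization p) :=
        pow_le_pow_of_le_one (by norm_num) (by norm_num) (by omega)

theorem hasSum_inv_two_pow_sub (a : ℕ) : HasSum (fun k : ℕ ↦ (2⁻¹ : ℝ) ^ (k - a)) (a + 2) := by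
  rw [← hasSum_nat_add_iff' a]
  have hinitial : ∑ i ∈ range a, (2⁻¹ : ℝ) ^ (i - a) = a := by
    rw [sum_congr rfl fun i hi ↦ by rw [Nat.sub_eq_zero_of_le (mem_range.1 hi).le, pow_zero]]
    simp
  rw [hinitial, add_sub_cancel_left]
  simpa using hasSum_geometric_two

theorem summable_gcd_prime_pow_div {p Q : ℕ} (hp : p.Prime) (hQ : Q ≠ 0) :
    Summable (fun k : ℕ ↦ ((p ^ k).gcd Q : ℝ) / (p ^ k : ℕ)) :=
  (hasSum_inv_two_pow_sub _).summable.of_nonneg_of_le (fun _ ↦ by positivity)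
    (gcd_prime_pow_div_le hp hQ)

theorem tsum_gcd_prime_pow_div_le {p Q : ℕ} (hp : p.Prime) (hQ : Q ≠ 0) :
    ∑' k : ℕ, ((p ^ k).gcd Q : ℝ) / (p ^ k : ℕ) ≤ Q.factorization p + 2 :=
  hasSum_le (gcd_prime_pow_div_le hp hQ) (summable_gcd_prime_pow_div hp hQ).hasSum
    (hasSum_inv_two_pow_sub _)

theorem add_two_le_max_mul_pow {y : ℝ} (hy : 1 < y) (a : ℕ) :
    (a + 2 : ℝ) ≤ max 1 (y - 1)⁻¹ * y ^ (a + 1) := by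
  have hK : 1 ≤ max 1 (y - 1)⁻¹ * (y - 1) := by
    rw [← div_le_iff₀ (by linarith), one_div]
    exact le_max_right _ _
  have hbernoulli : 1 + ((a + 1 : ℕ) : ℝ) * (y - 1) ≤ y ^ (a + 1) := by
    simpa using one_add_mul_le_pow (by linarith : (-2 : ℝ) ≤ y - 1) (a + 1)
  push_cast at hbernoulli
  nlinarith [le_max_left 1 (y - 1)⁻¹]

theorem prod_le_prod_range_of_one_le {f : ℕ → ℝ} {T : ℕ} (hf : ∀ n, 1 ≤ f n)
    (hT : ∀ n, T ≤ n → f n = 1) (s : Finset ℕ) : ∏ n ∈ s, f n ≤ ∏ n ∈ range T, f n :=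
  calc ∏ n ∈ s, f n ≤ ∏ n ∈ s ∪ range T, f n :=
        prod_le_prod_of_subset_of_one_le subset_union_left
          (fun n _ ↦ zero_le_one.trans (hf n)) fun n _ _ ↦ hf n
    _ = ∏ n ∈ range T, f n :=
        (prod_subset subset_union_right fun n _ hn ↦ hT n (by simpa using hn)).symm

theorem prod_pow_factorization_dvd (s : Finset ℕ) {Q : ℕ} (hQ : Q ≠ 0) :
    ∏ p ∈ s, p ^ Q.factorization p ∣ Q := by
  calc ∏ p ∈ s, p ^ Q.factorization p = ∏ p ∈ s ∩ Q.primeFactors, p ^ Q.factorization p := by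
        refine (prod_subset inter_subset_left fun p hps hp ↦ ?_).symm
        rw [Finsupp.notMem_support_iff.1 (by simpa [hps] using hp), pow_zero]
    _ ∣ ∏ p ∈ Q.primeFactors, p ^ Q.factorization p :=
        prod_dvd_prod_of_subset _ _ _ inter_subset_right
    _ = Q := (Nat.prod_primeFactors_pow_factorization hQ).symm

theorem prod_primeFactors_pow_factorization_succ_dvd {D Q : ℕ} (hQ : Q ≠ 0) :
    ∏ p ∈ D.primeFactors, p ^ (Q.factorization p + 1) ∣ D * Q := by
  simp_rw [pow_succ, prod_mul_distrib, mul_comm D]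
  exact mul_dvd_mul (prod_pow_factorization_dvd _ hQ) (Nat.prod_primeFactors_dvd D)

theorem exists_prod_factorization_add_two_le {ε : ℝ} (hε : 0 < ε) :
    ∃ C : ℝ, 0 < C ∧ ∀ D Q : ℕ, D ≠ 0 → Q ≠ 0 →
      ∏ p ∈ D.primeFactors, ((Q.factorization p : ℝ) + 2) ≤ C * ((D * Q : ℕ) : ℝ) ^ ε := by
  set w : ℕ → ℝ := fun p ↦ max 1 ((p : ℝ) ^ ε - 1)⁻¹
  have hw : ∀ p, 1 ≤ w p := fun p ↦ le_max_left _ _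
  -- `w p = 1` as soon as `p ^ ε ≥ 2`, so only the primes below `2 ^ (1 / ε)` cost anything.
  set T := ⌈(2 : ℝ) ^ ε⁻¹⌉₊
  have hwT : ∀ p, T ≤ p → w p = 1 := by
    intro p hp
    have h2 : 2 ≤ (p : ℝ) ^ ε :=
      calc (2 : ℝ) = ((2 : ℝ) ^ ε⁻¹) ^ ε := by
            rw [← Real.rpow_mul zero_le_two, inv_mul_cancel₀ hε.ne', Real.rpow_one]
        _ ≤ (p : ℝ) ^ ε := by
            gcongr
            exact (Nat.le_ceil _).trans (by exact_mod_cast hp)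
    exact max_eq_left (inv_le_one_of_one_le₀ (by linarith))
  refine ⟨∏ p ∈ range T, w p, prod_pos fun p _ ↦ one_pos.trans_le (hw p),
    fun D Q hD hQ ↦ ?_⟩
  have hpoint : ∀ p ∈ D.primeFactors,
      (Q.factorization p : ℝ) + 2 ≤ w p * ((p ^ (Q.factorization p + 1) : ℕ) : ℝ) ^ ε := by
    intro p hp
    have hy : 1 < (p : ℝ) ^ ε :=
      Real.one_lt_rpow (by exact_mod_cast (Nat.prime_of_mem_primeFactors hp).one_lt) hε
    rw [Nat.cast_pow, ← Real.rpow_natCast, ← Real.rpow_mul (Nat.cast_nonneg p),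
      mul_comm _ ε, Real.rpow_mul_natCast (Nat.cast_nonneg p)]
    exact add_two_le_max_mul_pow hy _
  have hdvd := prod_primeFactors_pow_factorization_succ_dvd (D := D) hQ
  calc ∏ p ∈ D.primeFactors, ((Q.factorization p : ℝ) + 2)
      ≤ ∏ p ∈ D.primeFactors, w p * ((p ^ (Q.factorization p + 1) : ℕ) : ℝ) ^ ε :=
        prod_le_prod (fun _ _ ↦ by positivity) hpoint
    _ = (∏ p ∈ D.primeFactors, w p) *
          ((∏ p ∈ D.primeFactors, p ^ (Q.factorization p + 1) : ℕ) : ℝ) ^ ε := by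
        rw [prod_mul_distrib, Nat.cast_prod, Real.finsetProd_rpow _ _ fun _ _ ↦ by positivity]
    _ ≤ (∏ p ∈ range T, w p) * ((D * Q : ℕ) : ℝ) ^ ε := by
        refine mul_le_mul (prod_le_prod_range_of_one_le hw hwT _) ?_ (by positivity)
          (by positivity)
        gcongr
        exact Nat.le_of_dvd (by positivity) hdvd

/-- For every `ε > 0` there is a constant `C = C(ε) > 0` such that for
all positive integers `D` and `Q`, the series `∑_{n ≥ 1, rad(n) ∣ D} gcd(n, Q)/n`
(over positive integers `n` all of whose prime factors divide `D`, including `n = 1`)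
converges and is at most `C · (D·Q)^ε`. -/
theorem stmt18 (ε : ℝ) (hε : 0 < ε) :
    ∃ C : ℝ, 0 < C ∧ ∀ D Q : ℕ, 0 < D → 0 < Q →
      Summable (fun n : ℕ =>
        if 0 < n ∧ n.primeFactors ⊆ D.primeFactors then (Nat.gcd n Q : ℝ) / (n : ℝ) else 0) ∧
      (∑' n : ℕ,
        if 0 < n ∧ n.primeFactors ⊆ D.primeFactors then (Nat.gcd n Q : ℝ) / (n : ℝ) else 0)
        ≤ C * ((D * Q : ℕ) : ℝ) ^ ε := by
  obtain ⟨C, hC, hbound⟩ := exists_prod_factorization_add_two_le hε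
  refine ⟨C, hC, fun D Q hD hQ ↦ ?_⟩
  have hsum := hasSum_ite_primeFactors_subset (f := fun n ↦ (n.gcd Q : ℝ) / n) (by simp)
    (fun h ↦ by exact_mod_cast gcd_mul_div_mul_of_coprime Q h)
    (fun hp ↦ by simpa using summable_gcd_prime_pow_div hp hQ.ne') D.primeFactors
  rw [filter_true_of_mem fun p ↦ Nat.prime_of_mem_primeFactors] at hsum
  refine ⟨hsum.summable, hsum.tsum_eq ▸ ?_⟩
  calc ∏ p ∈ D.primeFactors, ∑' k, ((p ^ k).gcd Q : ℝ) / ((p ^ k : ℕ) : ℝ)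
      ≤ ∏ p ∈ D.primeFactors, ((Q.factorization p : ℝ) + 2) :=
        prod_le_prod (fun _ _ ↦ tsum_nonneg fun _ ↦ by positivity)
          fun p hp ↦ tsum_gcd_prime_pow_div_le (Nat.prime_of_mem_primeFactors hp) hQ.ne'
    _ ≤ C * ((D * Q : ℕ) : ℝ) ^ ε := hbound D Q hD.ne' hQ.ne'
end
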